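/- arXiv:quant-ph/0310062 — 6 statements merged into one kernel-verified Lean document; each statement's English description precedes it below -/
import Mathlib

section
/- In any orthomodular lattice, the Dishkant implication is expressible via the Sasaki implication: a →₂ b = (b →₁ a) →₁ (a →₁ b), where →₁ is the Sasaki implication x →₁ y = xᶜ ∨ (x ∧ y) and →₂ is the Dishkant implication x →₂ y = y ∨ (xᶜ ∧ yᶜ). -/
class QuantumOML (α : Type*) extends Lattice α, BoundedOrder α where
  oc : α → α
  oc_involutive : ∀ a : α, oc (oc a) = a
  oc_antitone : ∀ a b : α, a ≤ b → oc b ≤ oc a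
  sup_oc : ∀ a : α, a ⊔ oc a = ⊤
  inf_oc : ∀ a : α, a ⊓ oc a = ⊥
  orthomodular : ∀ a b : α, a ≤ b → b = a ⊔ (oc a ⊓ b)

open QuantumOML

variable {α : Type*} [QuantumOML α]

/-- Sasaki implication -/
def imp1 (a b : α) : α := oc a ⊔ (a ⊓ b)

/-- Dishkant implication -/
def imp2 (a b : α) : α := b ⊔ (oc a ⊓ oc b)

lemma oc_le_oc_iff {a b : α} : oc a ≤ oc b ↔ b ≤ a := by
  constructor
  · intro h
    have := oc_antitone _ _ h
    rwa [oc_involutive, oc_involutive] at this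
  · exact oc_antitone _ _

lemma oc_sup (a b : α) : oc (a ⊔ b) = oc a ⊓ oc b := by
  apply le_antisymm
  · exact le_inf (oc_antitone _ _ le_sup_left) (oc_antitone _ _ le_sup_right)
  · have ha : a ≤ oc (oc a ⊓ oc b) := by
      have := oc_antitone _ _ (inf_le_left : oc a ⊓ oc b ≤ oc a)
      rwa [oc_involutive] at this
    have hb : b ≤ oc (oc a ⊓ oc b) := by
      have := oc_antitone _ _ (inf_le_right : oc a ⊓ oc b ≤ oc b)
      rwa [oc_involutive] at this
    have h : a ⊔ b ≤ oc (oc a ⊓ oc b) := sup_le ha hb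
    have := oc_antitone _ _ h
    rwa [oc_involutive] at this

lemma oc_inf (a b : α) : oc (a ⊓ b) = oc a ⊔ oc b := by
  have := oc_sup (oc a) (oc b)
  rw [oc_involutive, oc_involutive] at this
  rw [← this, oc_involutive]

/-- dual orthomodular law -/
lemma om_dual {p q : α} (h : q ≤ p) : p ⊓ (oc p ⊔ q) = q := by
  have h' := orthomodular (oc p) (oc q) (oc_antitone _ _ h)
  have := congrArg oc h'
  rw [oc_involutive, oc_sup, oc_inf, oc_involutive, oc_involutive] at this
  exact this.symm

lemma key {e x : α} (h : x ≤ oc e) : oc e ⊓ (e ⊔ x) = x := by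
  have := om_dual h
  rwa [oc_involutive] at this

lemma dist {e x y : α} (hx : x ≤ oc e) (hy : y ≤ oc e) :
    (e ⊔ x) ⊓ (e ⊔ y) = e ⊔ (x ⊓ y) := by
  set z := (e ⊔ x) ⊓ (e ⊔ y) with hz
  have he : e ≤ z := le_inf le_sup_left le_sup_left
  have h1 : oc e ⊓ z = x ⊓ y := by
    calc oc e ⊓ z = (oc e ⊓ (e ⊔ x)) ⊓ (e ⊔ y) := by rw [hz, inf_assoc]
    _ = x ⊓ (e ⊔ y) := by rw [key hx]
    _ = (x ⊓ oc e) ⊓ (e ⊔ y) := by rw [inf_eq_left.mpr hx]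
    _ = x ⊓ (oc e ⊓ (e ⊔ y)) := by rw [inf_assoc]
    _ = x ⊓ y := by rw [key hy]
  have := orthomodular e z he
  rw [h1] at this
  exact this

theorem dishkant_via_sasaki (a b : α) :
    imp2 a b = imp1 (imp1 b a) (imp1 a b) := by
  simp only [imp1, imp2]
  set e := a ⊓ b with he
  have hea : e ≤ a := inf_le_left
  have heb : e ≤ b := inf_le_right
  have hxa : oc a ≤ oc e := oc_antitone _ _ hea
  have hxb : oc b ≤ oc e := oc_antitone _ _ heb
  have hba : b ⊓ a = e := inf_comm b a
  rw [hba]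
  have hc : oc b ⊔ e = e ⊔ oc b := sup_comm _ _
  have hd : oc a ⊔ e = e ⊔ oc a := sup_comm _ _
  rw [hc, hd, dist hxb hxa, inf_comm (oc b) (oc a), oc_sup, oc_involutive]
  have hom := orthomodular e b heb
  calc b ⊔ (oc a ⊓ oc b) = (e ⊔ (oc e ⊓ b)) ⊔ (oc a ⊓ oc b) := by rw [← hom]
    _ = (oc e ⊓ b) ⊔ (e ⊔ (oc a ⊓ oc b)) := by
        rw [sup_comm e (oc e ⊓ b), sup_assoc]
end

section
/- In any orthomodular lattice, the Sasaki implication is expressible via the relevance implication: a →₁ b = a →₅ (a →₅ b), where →₁ is the Sasaki implication x →₁ y = xᶜ ∨ (x ∧ y) and →₅ is the relevance implication x →₅ y = ((x ∧ y) ∨ (xᶜ ∧ y)) ∨ (xᶜ ∧ yᶜ). -/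
open QuantumOML

variable {α : Type*} [QuantumOML α]

/-- relevance implication -/
def imp5 (a b : α) : α := ((a ⊓ b) ⊔ (oc a ⊓ b)) ⊔ (oc a ⊓ oc b)

lemma oc_sup' (x y : α) : oc (x ⊔ y) = oc x ⊓ oc y := by
  apply le_antisymm
  · exact le_inf (oc_antitone _ _ le_sup_left) (oc_antitone _ _ le_sup_right)
  · have h : x ⊔ y ≤ oc (oc x ⊓ oc y) := by
      apply sup_le
      · have := oc_antitone (oc x ⊓ oc y) (oc x) inf_le_left
        rwa [oc_involutive] at this
      · have := oc_antitone (oc x ⊓ oc y) (oc y) inf_le_right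
        rwa [oc_involutive] at this
    have := oc_antitone _ _ h
    rwa [oc_involutive] at this

lemma oc_inf' (x y : α) : oc (x ⊓ y) = oc x ⊔ oc y := by
  have := oc_sup' (oc x) (oc y)
  rw [oc_involutive, oc_involutive] at this
  rw [← this, oc_involutive]

lemma dualOM {u v : α} (h : v ≤ u) : u ⊓ (oc u ⊔ v) = v := by
  have h1 : oc u ≤ oc v := oc_antitone _ _ h
  have h2 : oc v = oc u ⊔ (oc (oc u) ⊓ oc v) := orthomodular _ _ h1
  have h3 : oc (oc v) = oc (oc u ⊔ (oc (oc u) ⊓ oc v)) := by rw [← h2]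
  rw [oc_involutive, oc_sup', oc_inf', oc_involutive, oc_involutive] at h3
  exact h3.symm

/-- if `p ≤ a` and `q ≤ aᶜ` then `a ⊓ (p ⊔ q) = p`. -/
lemma split_inf {a p q : α} (hp : p ≤ a) (hq : q ≤ oc a) : a ⊓ (p ⊔ q) = p := by
  apply le_antisymm
  · calc a ⊓ (p ⊔ q) ≤ a ⊓ (oc a ⊔ p) := by
          exact inf_le_inf_left _ (sup_le (le_sup_right) (le_trans hq le_sup_left))
    _ = p := dualOM hp
  · exact le_inf hp le_sup_left

theorem sasaki_via_relevance (a b : α) :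
    imp1 a b = imp5 a (imp5 a b) := by
  set p := a ⊓ b with hp
  set q := (oc a ⊓ b) ⊔ (oc a ⊓ oc b) with hq
  have hpa : p ≤ a := inf_le_left
  have hqa : q ≤ oc a := sup_le inf_le_left inf_le_left
  have hc : imp5 a b = p ⊔ q := by rw [imp5, hq, sup_assoc]
  set c := imp5 a b with hcdef
  -- a ⊓ c = p
  have h1 : a ⊓ c = p := by rw [hc]; exact split_inf hpa hqa
  -- oc a ⊓ c = q
  have h2 : oc a ⊓ c = q := by
    rw [hc, sup_comm]
    exact split_inf hqa (by rw [oc_involutive]; exact hpa)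
  -- oc a ⊓ oc c = oc a ⊓ oc q
  have h3 : oc a ⊓ oc c = oc a ⊓ oc q := by
    apply le_antisymm
    · exact inf_le_inf_left _ (oc_antitone _ _ (by rw [hc]; exact le_sup_right))
    · have hcle : c ≤ a ⊔ q := by rw [hc]; exact sup_le (le_trans hpa le_sup_left) le_sup_right
      have := oc_antitone _ _ hcle
      rw [oc_sup'] at this
      exact le_inf inf_le_left this
  have hom : oc a = q ⊔ (oc q ⊓ oc a) := orthomodular _ _ hqa
  rw [imp5, h1, h2, h3, imp1, sup_assoc, inf_comm (oc a) (oc q), ← hom, sup_comm]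
end

section
/- In any orthomodular lattice, for each i ∈ {1,2,3,4,5}, the equation a →₂ b = (b →ᵢ (b →ᵢ a)) →ᵢ (((a →ᵢ b) →ᵢ a) →ᵢ b) holds, where →₂ is the Dishkant implication and →ᵢ ranges over the five quantum implications. -/
open QuantumOML

variable {α : Type*} [QuantumOML α]


/-- The five quantum implications, indexed by i = 1,...,5. -/
def qimp (i : ℕ) (a b : α) : α :=
  match i with
  | 1 => oc a ⊔ (a ⊓ b)
  | 2 => b ⊔ (oc a ⊓ oc b)
  | 3 => ((oc a ⊓ b) ⊔ (oc a ⊓ oc b)) ⊔ (a ⊓ (oc a ⊔ b))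
  | 4 => ((a ⊓ b) ⊔ (oc a ⊓ b)) ⊔ ((oc a ⊔ b) ⊓ oc b)
  | _ => ((a ⊓ b) ⊔ (oc a ⊓ b)) ⊔ (oc a ⊓ oc b)

namespace QOML
open QuantumOML

@[simp] lemma oc_oc (a : α) : oc (oc a) = a := oc_involutive a

lemma oc_le_oc {a b : α} (h : a ≤ b) : oc b ≤ oc a := oc_antitone a b h

lemma le_of_oc_le_oc {a b : α} (h : oc a ≤ oc b) : b ≤ a := by
  have := oc_le_oc h; simpa using this

lemma oc_sup (a b : α) : oc (a ⊔ b) = oc a ⊓ oc b := by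
  apply le_antisymm
  · exact le_inf (oc_le_oc le_sup_left) (oc_le_oc le_sup_right)
  · apply le_of_oc_le_oc
    simp only [oc_oc]
    exact sup_le (le_of_oc_le_oc (by simpa using inf_le_left (a := oc a) (b := oc b)))
      (le_of_oc_le_oc (by simpa using inf_le_right (a := oc a) (b := oc b)))

lemma oc_inf (a b : α) : oc (a ⊓ b) = oc a ⊔ oc b := by
  have := oc_sup (oc a) (oc b)
  simp only [oc_oc] at this
  rw [← this, oc_oc]

lemma inf_oc' (a : α) : oc a ⊓ a = ⊥ := by rw [inf_comm]; exact inf_oc a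
lemma sup_oc' (a : α) : oc a ⊔ a = ⊤ := by rw [sup_comm]; exact sup_oc a

/-- orthomodularity restated -/
lemma om {a b : α} (h : a ≤ b) : a ⊔ (oc a ⊓ b) = b := (orthomodular a b h).symm

/-- commutes -/
def Cm (a b : α) : Prop := a = (a ⊓ b) ⊔ (a ⊓ oc b)

lemma Cm.ocr {a b : α} (h : Cm a b) : Cm a (oc b) := by
  unfold Cm at *; rw [oc_oc, sup_comm]; exact h

lemma cm_of_le {a b : α} (h : a ≤ b) : Cm a b := by
  unfold Cm; rw [inf_eq_left.mpr h]; exact (sup_eq_left.mpr inf_le_left).symm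

lemma cm_of_ge {a b : α} (h : b ≤ a) : Cm a b := by
  unfold Cm; rw [inf_eq_right.mpr h, inf_comm]; exact orthomodular b a h

lemma Cm.symm {a b : α} (h : Cm a b) : Cm b a := by
  unfold Cm at *
  have ha' : oc a = (oc a ⊔ oc b) ⊓ (oc a ⊔ b) := by
    have := congrArg oc h
    rwa [oc_sup, oc_inf, oc_inf, oc_oc] at this
  have h1 : oc a ⊓ b = (oc a ⊔ oc b) ⊓ b := by
    conv_lhs => rw [ha']
    rw [inf_assoc, inf_eq_right.mpr (le_sup_right : b ≤ oc a ⊔ b)]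
  have h2 : b = (a ⊓ b) ⊔ (oc (a ⊓ b) ⊓ b) := orthomodular (a ⊓ b) b inf_le_right
  rw [oc_inf] at h2
  rw [inf_comm b a, inf_comm b (oc a), h1]
  exact h2

lemma Cm.ocl {a b : α} (h : Cm a b) : Cm (oc a) b := h.symm.ocr.symm

/-- key lemma: if a commutes with b then a ⊓ (oc a ⊔ b) = a ⊓ b -/
lemma Cm.inf_oc_sup {a b : α} (h : Cm a b) : a ⊓ (oc a ⊔ b) = a ⊓ b := by
  have hu : a ⊓ b ≤ a ⊓ (oc a ⊔ b) := inf_le_inf_left a le_sup_right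
  have h2 := om hu
  rw [oc_inf] at h2
  -- a⊓(a'⊔b) = (a⊓b) ⊔ ((a'⊔b')⊓(a⊓(a'⊔b)))
  have hz : (oc a ⊔ oc b) ⊓ (a ⊓ (oc a ⊔ b)) = ⊥ := by
    have ha' : oc a = (oc a ⊔ oc b) ⊓ (oc a ⊔ b) := by
      have := congrArg oc h
      rwa [oc_sup, oc_inf, oc_inf, oc_oc] at this
    calc (oc a ⊔ oc b) ⊓ (a ⊓ (oc a ⊔ b)) = a ⊓ ((oc a ⊔ oc b) ⊓ (oc a ⊔ b)) := by
          ac_rfl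
      _ = a ⊓ oc a := by rw [← ha']
      _ = ⊥ := inf_oc a
  rw [← h2, hz, sup_bot_eq]

/-- Foulis–Holland: meet over join -/
lemma Cm.inf_sup {a b c : α} (hb : Cm a b) (hc : Cm a c) :
    a ⊓ (b ⊔ c) = (a ⊓ b) ⊔ (a ⊓ c) := by
  set x := (a ⊓ b) ⊔ (a ⊓ c) with hx
  have hxy : x ≤ a ⊓ (b ⊔ c) :=
    sup_le (le_inf inf_le_left (le_trans inf_le_right le_sup_left))
      (le_inf inf_le_left (le_trans inf_le_right le_sup_right))
  have h2 := om hxy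
  have hz : oc x ⊓ (a ⊓ (b ⊔ c)) = ⊥ := by
    have hxoc : oc x = (oc a ⊔ oc b) ⊓ (oc a ⊔ oc c) := by
      rw [hx, oc_sup, oc_inf, oc_inf]
    have s1 : a ⊓ (oc a ⊔ oc b) = a ⊓ oc b := hb.ocr.inf_oc_sup
    have s2 : a ⊓ (oc a ⊔ oc c) = a ⊓ oc c := hc.ocr.inf_oc_sup
    have : oc x ⊓ (a ⊓ (b ⊔ c)) = (b ⊔ c) ⊓ ((a ⊓ oc b) ⊓ oc c) := by
      rw [hxoc]
      calc (oc a ⊔ oc b) ⊓ (oc a ⊔ oc c) ⊓ (a ⊓ (b ⊔ c))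
          = (b ⊔ c) ⊓ ((a ⊓ (oc a ⊔ oc b)) ⊓ (oc a ⊔ oc c)) := by ac_rfl
        _ = (b ⊔ c) ⊓ ((a ⊓ oc b) ⊓ (oc a ⊔ oc c)) := by rw [s1]
        _ = (b ⊔ c) ⊓ ((a ⊓ (oc a ⊔ oc c)) ⊓ oc b) := by ac_rfl
        _ = (b ⊔ c) ⊓ ((a ⊓ oc c) ⊓ oc b) := by rw [s2]
        _ = (b ⊔ c) ⊓ ((a ⊓ oc b) ⊓ oc c) := by ac_rfl
    rw [this]
    have hle : (a ⊓ oc b) ⊓ oc c ≤ oc b ⊓ oc c :=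
      inf_le_inf_right _ inf_le_right
    have : (b ⊔ c) ⊓ ((a ⊓ oc b) ⊓ oc c) ≤ (b ⊔ c) ⊓ (oc b ⊓ oc c) :=
      inf_le_inf_left _ hle
    rw [← oc_sup] at this
    exact le_bot_iff.mp (le_trans this (le_of_eq (inf_oc _)))
  rw [← h2, hz, sup_bot_eq]

/-- Foulis–Holland: join over meet -/
lemma Cm.sup_inf {a b c : α} (hb : Cm a b) (hc : Cm a c) :
    a ⊔ (b ⊓ c) = (a ⊔ b) ⊓ (a ⊔ c) := by
  have h := Cm.inf_sup (a := oc a) (b := oc b) (c := oc c) hb.ocl.ocr hc.ocl.ocr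
  have := congrArg oc h
  simp only [oc_inf, oc_sup, oc_oc] at this
  exact this

lemma Cm.supr {a b c : α} (hb : Cm a b) (hc : Cm a c) : Cm a (b ⊔ c) := by
  unfold Cm
  rw [oc_sup]
  have h1 : a ⊓ (b ⊔ c) = (a ⊓ b) ⊔ (a ⊓ c) := hb.inf_sup hc
  rw [h1]
  -- a = (a⊓b)⊔(a⊓c)⊔(a⊓(b'⊓c'))
  set R := (a ⊓ b) ⊔ (a ⊓ c) ⊔ (a ⊓ (oc b ⊓ oc c)) with hR
  have hRa : R ≤ a := sup_le (sup_le inf_le_left inf_le_left) inf_le_left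
  have h2 := om hRa
  have hz : oc R ⊓ a = ⊥ := by
    have hRoc : oc R = (oc a ⊔ oc b) ⊓ (oc a ⊔ oc c) ⊓ (oc a ⊔ (b ⊔ c)) := by
      rw [hR, oc_sup, oc_sup, oc_inf, oc_inf, oc_inf, oc_inf, oc_oc, oc_oc]
    have s1 : a ⊓ (oc a ⊔ oc b) = a ⊓ oc b := hb.ocr.inf_oc_sup
    have s2 : a ⊓ (oc a ⊔ oc c) = a ⊓ oc c := hc.ocr.inf_oc_sup
    calc oc R ⊓ a = a ⊓ (oc a ⊔ oc b) ⊓ ((oc a ⊔ oc c) ⊓ (oc a ⊔ (b ⊔ c))) := by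
          rw [hRoc]; ac_rfl
      _ = a ⊓ oc b ⊓ ((oc a ⊔ oc c) ⊓ (oc a ⊔ (b ⊔ c))) := by rw [s1]
      _ = a ⊓ (oc a ⊔ oc c) ⊓ (oc b ⊓ (oc a ⊔ (b ⊔ c))) := by ac_rfl
      _ = a ⊓ oc c ⊓ (oc b ⊓ (oc a ⊔ (b ⊔ c))) := by rw [s2]
      _ = (a ⊓ oc b ⊓ oc c) ⊓ (oc a ⊔ (b ⊔ c)) := by ac_rfl
      _ = ⊥ := by
          have : a ⊓ oc b ⊓ oc c = a ⊓ (oc b ⊓ oc c) := inf_assoc a _ _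
          rw [this, ← oc_sup]
          have h3 : oc a ⊔ (b ⊔ c) = oc (a ⊓ oc (b ⊔ c)) := by rw [oc_inf, oc_oc]
          rw [h3]
          exact inf_oc _
  rw [← h2, hz, sup_bot_eq]

lemma Cm.infr {a b c : α} (hb : Cm a b) (hc : Cm a c) : Cm a (b ⊓ c) := by
  have := (hb.ocr.supr hc.ocr).ocr
  rwa [oc_sup, oc_oc, oc_oc] at this

lemma cm_oc_self (a : α) : Cm a (oc a) := by
  simp [Cm, oc_oc, inf_oc]

lemma cm_self (a : α) : Cm a a := cm_of_le le_rfl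

/-- split -/
lemma Cm.split {a b : α} (h : Cm a b) : a = (a ⊓ b) ⊔ (a ⊓ oc b) := h

-- extensions
lemma Cm.ocr' {a b : α} (h : Cm a (oc b)) : Cm a b := by
  have := h.ocr; rwa [oc_oc] at this

lemma Cm.ocl' {a b : α} (h : Cm (oc a) b) : Cm a b := by
  have := h.ocl; rwa [oc_oc] at this

lemma cm_of_le_oc {a b : α} (h : a ≤ oc b) : Cm a b := (cm_of_le h).ocr'
lemma cm_of_ge_oc {a b : α} (h : oc b ≤ a) : Cm a b := (cm_of_ge h).ocr'

lemma bot_of_le_le {z x : α} (h1 : z ≤ x) (h2 : z ≤ oc x) : z = ⊥ :=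
  le_bot_iff.mp (le_of_le_of_eq (le_inf h1 h2) (inf_oc x))

lemma Cm.inf_sup3 {a b c d : α} (hb : Cm a b) (hc : Cm a c) (hd : Cm a d) :
    a ⊓ ((b ⊔ c) ⊔ d) = ((a ⊓ b) ⊔ (a ⊓ c)) ⊔ (a ⊓ d) := by
  rw [(hb.supr hc).inf_sup hd, hb.inf_sup hc]

lemma eq_oc_of_cm {x y : α} (h : Cm y x) (hbot : x ⊓ y = ⊥) (htop : x ⊔ y = ⊤) :
    y = oc x := by
  apply le_antisymm
  · conv_lhs => rw [h.split]
    rw [inf_comm y x, hbot, bot_sup_eq]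
    exact inf_le_right
  · have h2 : oc x = oc x ⊓ (x ⊔ y) := by rw [htop, inf_top_eq]
    rw [h2, ((cm_oc_self x).symm).inf_sup h.symm.ocl, inf_oc' x, bot_sup_eq]
    exact inf_le_right

lemma mo2_join {c x y : α} (hcx : Cm c x) (hcy : Cm c y) (h : oc x ⊓ oc y ≤ c) :
    (x ⊓ oc c) ⊔ (y ⊓ oc c) = oc c := by
  set m := (x ⊓ oc c) ⊔ (y ⊓ oc c) with hm
  have hmle : m ≤ oc c := sup_le inf_le_right inf_le_right
  have hom := om hmle
  have hocm : oc m = c ⊔ (oc x ⊓ oc y) := by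
    rw [hm, oc_sup, oc_inf, oc_inf, oc_oc, sup_comm (oc x) c, sup_comm (oc y) c,
      ← hcx.ocr.sup_inf hcy.ocr]
  have hz : oc m ⊓ oc c = ⊥ := by
    rw [hocm, inf_comm]
    rw [(cm_oc_self c).symm.inf_sup
      ((cm_of_le_oc (h.trans (le_of_eq (oc_oc c).symm))).symm : Cm (oc c) (oc x ⊓ oc y))]
    rw [inf_oc' c, bot_sup_eq]
    exact bot_of_le_le inf_le_right (le_trans inf_le_left (by simpa using oc_le_oc h))
  rw [hz, sup_bot_eq] at hom
  exact hom

lemma om_sup_version {e b : α} (h : e ≤ b) : (b ⊓ oc e) ⊔ e = b := by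
  have := om h
  rw [sup_comm, inf_comm] at this
  exact this

/-- case 1 : Sasaki implication -/
lemma case1 (a b : α) :
    qimp 1 (qimp 1 b (qimp 1 b a)) (qimp 1 (qimp 1 (qimp 1 a b) a) b) = b ⊔ (oc a ⊓ oc b) := by
  simp only [qimp]
  have h1 : b ⊓ (oc b ⊔ (b ⊓ a)) = b ⊓ a := by
    rw [(cm_of_ge (inf_le_left : b ⊓ a ≤ b)).inf_oc_sup, ← inf_assoc, inf_idem]
  have h2 : oc (oc a ⊔ (a ⊓ b)) ⊔ ((oc a ⊔ (a ⊓ b)) ⊓ a) = a := by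
    have hq : (oc a ⊔ (a ⊓ b)) ⊓ a = a ⊓ b := by
      rw [inf_comm, (cm_of_ge (inf_le_left : a ⊓ b ≤ a)).inf_oc_sup, ← inf_assoc, inf_idem]
    rw [hq, oc_sup, oc_oc]
    exact om_sup_version inf_le_left
  rw [h1, h2]
  have h3 : (oc b ⊔ (b ⊓ a)) ⊓ (oc a ⊔ (a ⊓ b)) = (b ⊓ a) ⊔ (oc b ⊓ oc a) := by
    have c1 : Cm (b ⊓ a) (oc b) := (cm_of_le (inf_le_left : b ⊓ a ≤ b)).ocr
    have c2 : Cm (b ⊓ a) (oc a) := (cm_of_le (inf_le_right : b ⊓ a ≤ a)).ocr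
    rw [inf_comm a b, sup_comm (oc b), sup_comm (oc a), ← c1.sup_inf c2]
  rw [h3, oc_sup, oc_oc]
  calc (b ⊓ oc (b ⊓ a)) ⊔ ((b ⊓ a) ⊔ (oc b ⊓ oc a))
      = ((b ⊓ oc (b ⊓ a)) ⊔ (b ⊓ a)) ⊔ (oc b ⊓ oc a) := by ac_rfl
    _ = b ⊔ (oc a ⊓ oc b) := by rw [om_sup_version inf_le_left, inf_comm (oc b) (oc a)]

/-- case 2 : Dishkant implication -/
lemma case2 (a b : α) :
    qimp 2 (qimp 2 b (qimp 2 b a)) (qimp 2 (qimp 2 (qimp 2 a b) a) b) = b ⊔ (oc a ⊓ oc b) := by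
  simp only [qimp]
  have h1 : (a ⊔ (oc b ⊓ oc a)) ⊔ (oc b ⊓ oc (a ⊔ (oc b ⊓ oc a))) = a ⊔ (oc b ⊓ oc a) := by
    have hz : oc b ⊓ oc (a ⊔ (oc b ⊓ oc a)) = ⊥ := by
      rw [oc_sup, oc_inf, oc_oc, oc_oc]
      refine bot_of_le_le (x := b ⊔ a) (le_trans inf_le_right inf_le_right) ?_
      rw [oc_sup]
      exact le_inf inf_le_left (le_trans inf_le_right inf_le_left)
    rw [hz, sup_bot_eq]
  have h2 : a ⊔ (oc (b ⊔ (oc a ⊓ oc b)) ⊓ oc a) = a := by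
    have hz : oc (b ⊔ (oc a ⊓ oc b)) ⊓ oc a = ⊥ := by
      rw [oc_sup, oc_inf, oc_oc, oc_oc]
      refine bot_of_le_le (x := a ⊔ b) (le_trans inf_le_left inf_le_right) ?_
      rw [oc_sup]
      exact le_inf inf_le_right (le_trans inf_le_left inf_le_left)
    rw [hz, sup_bot_eq]
  rw [h1, h2]
  have hz : oc (a ⊔ (oc b ⊓ oc a)) ⊓ oc (b ⊔ (oc a ⊓ oc b)) = ⊥ := by
    rw [oc_sup, oc_sup, oc_inf, oc_inf, oc_oc, oc_oc]
    refine bot_of_le_le (x := a ⊔ b) (le_trans inf_le_right inf_le_right) ?_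
    rw [oc_sup]
    exact le_inf (le_trans inf_le_left inf_le_left) (le_trans inf_le_right inf_le_left)
  rw [hz, sup_bot_eq]
/-- case 3 : Kalmbach implication -/
lemma case3 (a b : α) :
    qimp 3 (qimp 3 b (qimp 3 b a)) (qimp 3 (qimp 3 (qimp 3 a b) a) b) = b ⊔ (oc a ⊓ oc b) := by
  simp only [qimp]
  set u : α := ((oc b ⊓ a) ⊔ (oc b ⊓ oc a)) ⊔ (b ⊓ (oc b ⊔ a)) with hu
  set v : α := ((oc a ⊓ b) ⊔ (oc a ⊓ oc b)) ⊔ (a ⊓ (oc a ⊔ b)) with hv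
  -- commutation facts for u
  have cmb'u : Cm (oc b) u :=
    ((cm_of_ge inf_le_left).supr (cm_of_ge inf_le_left)).supr
      ((cm_of_le (inf_le_left : b ⊓ (oc b ⊔ a) ≤ b)).ocr).symm
  have cmbu : Cm b u := cmb'u.ocl'
  have cmb1 : Cm b (oc b ⊓ a) := ((cm_of_le (inf_le_left : oc b ⊓ a ≤ oc b)).ocr').symm
  have cmb2 : Cm b (oc b ⊓ oc a) := ((cm_of_le (inf_le_left : oc b ⊓ oc a ≤ oc b)).ocr').symm
  have cmb3 : Cm b (b ⊓ (oc b ⊔ a)) := cm_of_ge inf_le_left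
  have hbu : b ⊓ u = b ⊓ (oc b ⊔ a) := by
    rw [hu, Cm.inf_sup3 cmb1 cmb2 cmb3]
    have z1 : b ⊓ (oc b ⊓ a) = ⊥ :=
      bot_of_le_le inf_le_left (le_trans inf_le_right inf_le_left)
    have z2 : b ⊓ (oc b ⊓ oc a) = ⊥ :=
      bot_of_le_le inf_le_left (le_trans inf_le_right inf_le_left)
    have z3 : b ⊓ (b ⊓ (oc b ⊔ a)) = b ⊓ (oc b ⊔ a) := by rw [← inf_assoc, inf_idem]
    rw [z1, z2, z3]
    simp
  have hL : ((oc b ⊓ u) ⊔ (oc b ⊓ oc u)) ⊔ (b ⊓ (oc b ⊔ u)) = oc b ⊔ (b ⊓ (oc b ⊔ a)) := by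
    rw [cmbu.inf_oc_sup, hbu, ← cmb'u.split]
  rw [hL]
  -- v side
  have cma1 : Cm a (oc a ⊓ b) := ((cm_of_le (inf_le_left : oc a ⊓ b ≤ oc a)).ocr').symm
  have cma2 : Cm a (oc a ⊓ oc b) := ((cm_of_le (inf_le_left : oc a ⊓ oc b ≤ oc a)).ocr').symm
  have cma3 : Cm a (a ⊓ (oc a ⊔ b)) := cm_of_ge inf_le_left
  have cmav : Cm a v := (cma1.supr cma2).supr cma3
  have hav : a ⊓ v = a ⊓ (oc a ⊔ b) := by
    rw [hv, Cm.inf_sup3 cma1 cma2 cma3]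
    have z1 : a ⊓ (oc a ⊓ b) = ⊥ :=
      bot_of_le_le inf_le_left (le_trans inf_le_right inf_le_left)
    have z2 : a ⊓ (oc a ⊓ oc b) = ⊥ :=
      bot_of_le_le inf_le_left (le_trans inf_le_right inf_le_left)
    have z3 : a ⊓ (a ⊓ (oc a ⊔ b)) = a ⊓ (oc a ⊔ b) := by rw [← inf_assoc, inf_idem]
    rw [z1, z2, z3]
    simp
  have hocv : oc v = ((a ⊔ oc b) ⊓ (a ⊔ b)) ⊓ (oc a ⊔ (a ⊓ oc b)) := by
    rw [hv]; simp only [oc_sup, oc_inf, oc_oc]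
  set d : α := oc a ⊓ ((a ⊔ oc b) ⊓ (a ⊔ b)) with hd
  have hv'a : oc v ⊓ a = a ⊓ oc b := by
    rw [hocv, inf_comm _ a]
    apply le_antisymm
    · calc a ⊓ (((a ⊔ oc b) ⊓ (a ⊔ b)) ⊓ (oc a ⊔ (a ⊓ oc b)))
          ≤ a ⊓ (oc a ⊔ (a ⊓ oc b)) := inf_le_inf_left a inf_le_right
        _ = a ⊓ (a ⊓ oc b) := (cm_of_ge inf_le_left).inf_oc_sup
        _ ≤ a ⊓ oc b := by rw [← inf_assoc, inf_idem]
    · exact le_inf inf_le_left (le_inf (le_inf (le_sup_left.trans' inf_le_left)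
        (le_sup_left.trans' inf_le_left)) le_sup_right)
  have hv'a' : oc v ⊓ oc a = d := by
    rw [hocv, hd]
    apply le_antisymm
    · exact le_inf inf_le_right (le_trans inf_le_left inf_le_left)
    · exact le_inf (le_inf inf_le_right (le_sup_left.trans' inf_le_left)) inf_le_left
  have hva : v ⊓ (oc v ⊔ a) = a ⊓ (oc a ⊔ b) := by
    rw [cmav.symm.inf_oc_sup, inf_comm v a, hav]
  have hw : ((oc v ⊓ a) ⊔ (oc v ⊓ oc a)) ⊔ (v ⊓ (oc v ⊔ a)) = a ⊔ d := by
    have homa : (a ⊓ oc b) ⊔ (oc (a ⊓ oc b) ⊓ a) = a := om inf_le_left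
    rw [oc_inf, oc_oc, inf_comm (oc a ⊔ b) a] at homa
    rw [hv'a, hv'a', hva]
    calc ((a ⊓ oc b) ⊔ d) ⊔ (a ⊓ (oc a ⊔ b))
        = ((a ⊓ oc b) ⊔ (a ⊓ (oc a ⊔ b))) ⊔ d := by ac_rfl
      _ = a ⊔ d := by rw [homa]
  rw [hw]
  -- R3 : qimp 3 (a ⊔ d) b
  have hocw : oc (a ⊔ d) = (oc a ⊓ b) ⊔ (oc a ⊓ oc b) := by
    rw [hd]
    simp only [oc_sup, oc_inf, oc_oc]
    -- oc a ⊓ (a ⊔ ((oc a ⊓ b) ⊔ (oc a ⊓ oc b)))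
    have c0 : Cm (oc a) a := (cm_oc_self a).symm
    have c1 : Cm (oc a) (oc a ⊓ b) := cm_of_ge inf_le_left
    have c2 : Cm (oc a) (oc a ⊓ oc b) := cm_of_ge inf_le_left
    calc oc a ⊓ (a ⊔ ((oc a ⊓ b) ⊔ (oc a ⊓ oc b)))
        = oc a ⊓ ((a ⊔ (oc a ⊓ b)) ⊔ (oc a ⊓ oc b)) := by rw [sup_assoc]
      _ = ((oc a ⊓ a) ⊔ (oc a ⊓ (oc a ⊓ b))) ⊔ (oc a ⊓ (oc a ⊓ oc b)) := by
          rw [Cm.inf_sup3 c0 c1 c2]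
      _ = (oc a ⊓ b) ⊔ (oc a ⊓ oc b) := by
          rw [inf_oc', ← inf_assoc, inf_idem, ← inf_assoc, inf_idem, bot_sup_eq]
  have cmbw' : Cm b ((oc a ⊓ b) ⊔ (oc a ⊓ oc b)) :=
    (cm_of_ge inf_le_right).supr ((cm_of_le (inf_le_right : oc a ⊓ oc b ≤ oc b)).ocr').symm
  have cmbw : Cm b (a ⊔ d) := by
    have h := cmbw'
    rw [← hocw] at h
    exact h.ocr'
  have hw'b : oc (a ⊔ d) ⊓ b = oc a ⊓ b := by
    rw [hocw, inf_comm _ b,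
      (cm_of_ge inf_le_right).inf_sup ((cm_of_le (inf_le_right : oc a ⊓ oc b ≤ oc b)).ocr').symm]
    have z1 : b ⊓ (oc a ⊓ b) = oc a ⊓ b := by
      rw [inf_comm (oc a) b, ← inf_assoc, inf_idem, inf_comm]
    have z2 : b ⊓ (oc a ⊓ oc b) = ⊥ :=
      bot_of_le_le inf_le_left (le_trans inf_le_right inf_le_right)
    rw [z1, z2, sup_bot_eq]
  have hw'b' : oc (a ⊔ d) ⊓ oc b = oc a ⊓ oc b := by
    have c1 : Cm (oc b) (oc a ⊓ b) := ((cm_of_le (inf_le_right : oc a ⊓ b ≤ b)).ocr).symm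
    have c2 : Cm (oc b) (oc a ⊓ oc b) := cm_of_ge inf_le_right
    rw [hocw, inf_comm _ (oc b), c1.inf_sup c2]
    have z1 : oc b ⊓ (oc a ⊓ b) = ⊥ :=
      bot_of_le_le (le_trans inf_le_right inf_le_right) inf_le_left
    have z2 : oc b ⊓ (oc a ⊓ oc b) = oc a ⊓ oc b := by
      rw [inf_comm (oc a) (oc b), ← inf_assoc, inf_idem, inf_comm]
    rw [z1, z2, bot_sup_eq]
  have hR : ((oc (a ⊔ d) ⊓ b) ⊔ (oc (a ⊔ d) ⊓ oc b)) ⊔ ((a ⊔ d) ⊓ (oc (a ⊔ d) ⊔ b)) =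
      b ⊔ (oc a ⊓ oc b) := by
    rw [cmbw.symm.inf_oc_sup, hw'b, hw'b']
    have hsb : b = (b ⊓ (a ⊔ d)) ⊔ (b ⊓ oc (a ⊔ d)) := cmbw.split
    calc ((oc a ⊓ b) ⊔ (oc a ⊓ oc b)) ⊔ ((a ⊔ d) ⊓ b)
        = ((b ⊓ (a ⊔ d)) ⊔ (oc a ⊓ b)) ⊔ (oc a ⊓ oc b) := by ac_rfl
      _ = ((b ⊓ (a ⊔ d)) ⊔ (b ⊓ oc (a ⊔ d))) ⊔ (oc a ⊓ oc b) := by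
          rw [← hw'b, inf_comm (oc (a ⊔ d)) b]
      _ = b ⊔ (oc a ⊓ oc b) := by rw [← hsb]
  rw [hR]
  -- final step : qimp 3 (oc b ⊔ (b ⊓ (oc b ⊔ a))) (b ⊔ (oc a ⊓ oc b))
  set l : α := oc b ⊔ (b ⊓ (oc b ⊔ a)) with hl
  set t : α := b ⊔ (oc a ⊓ oc b) with ht
  have hocl : oc l = b ⊓ oc a := by
    rw [hl]
    simp only [oc_sup, oc_inf, oc_oc]
    -- b ⊓ (oc b ⊔ (b ⊓ oc a))
    rw [(cm_oc_self b).inf_sup (cm_of_ge inf_le_left), inf_oc, ← inf_assoc, inf_idem,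
      bot_sup_eq]
  have hp1 : oc l ⊓ t = oc l := by
    rw [hocl, ht]
    exact inf_eq_left.mpr (le_sup_left.trans' inf_le_left)
  have hp2 : oc l ⊓ oc t = ⊥ := by
    rw [hocl, ht, oc_sup, oc_inf, oc_oc, oc_oc]
    exact bot_of_le_le (x := b) (le_trans inf_le_left inf_le_left)
      (le_trans inf_le_right inf_le_left)
  have hp3 : oc l ⊔ t = t := by
    rw [hocl, ht]
    exact sup_eq_right.mpr (le_sup_left.trans' inf_le_left)
  have cmtl : Cm t l := by
    have h1 : Cm t (b ⊓ oc a) :=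
      (cm_of_le (le_sup_left.trans' (inf_le_left : b ⊓ oc a ≤ b) : b ⊓ oc a ≤ t)).symm
    have h2 := h1.ocr
    rw [← hocl, oc_oc] at h2
    exact h2
  calc ((oc l ⊓ t) ⊔ (oc l ⊓ oc t)) ⊔ (l ⊓ (oc l ⊔ t))
      = ((oc l ⊓ t) ⊔ ⊥) ⊔ (l ⊓ t) := by rw [hp2, hp3]
    _ = (t ⊓ l) ⊔ (t ⊓ oc l) := by rw [sup_bot_eq, inf_comm (oc l) t, inf_comm l t]; ac_rfl
    _ = t := cmtl.split.symm

/-- case 5 : relevance implication -/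
lemma case5 (a b : α) :
    qimp 5 (qimp 5 b (qimp 5 b a)) (qimp 5 (qimp 5 (qimp 5 a b) a) b) = b ⊔ (oc a ⊓ oc b) := by
  simp only [qimp]
  set u : α := ((b ⊓ a) ⊔ (oc b ⊓ a)) ⊔ (oc b ⊓ oc a) with hu
  set v : α := ((a ⊓ b) ⊔ (oc a ⊓ b)) ⊔ (oc a ⊓ oc b) with hv
  have cmb1 : Cm b (b ⊓ a) := cm_of_ge inf_le_left
  have cmb2 : Cm b (oc b ⊓ a) := ((cm_of_le (inf_le_left : oc b ⊓ a ≤ oc b)).ocr').symm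
  have cmb3 : Cm b (oc b ⊓ oc a) := ((cm_of_le (inf_le_left : oc b ⊓ oc a ≤ oc b)).ocr').symm
  have cmb'u : Cm (oc b) u :=
    (((cm_of_le (inf_le_left : b ⊓ a ≤ b)).ocr).symm.supr (cm_of_ge inf_le_left)).supr
      (cm_of_ge inf_le_left)
  have hbu : b ⊓ u = b ⊓ a := by
    rw [hu, Cm.inf_sup3 cmb1 cmb2 cmb3]
    have z1 : b ⊓ (b ⊓ a) = b ⊓ a := by rw [← inf_assoc, inf_idem]
    have z2 : b ⊓ (oc b ⊓ a) = ⊥ :=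
      bot_of_le_le inf_le_left (le_trans inf_le_right inf_le_left)
    have z3 : b ⊓ (oc b ⊓ oc a) = ⊥ :=
      bot_of_le_le inf_le_left (le_trans inf_le_right inf_le_left)
    rw [z1, z2, z3]
    simp
  have hL : ((b ⊓ u) ⊔ (oc b ⊓ u)) ⊔ (oc b ⊓ oc u) = (b ⊓ a) ⊔ oc b := by
    rw [hbu]
    calc ((b ⊓ a) ⊔ (oc b ⊓ u)) ⊔ (oc b ⊓ oc u)
        = (b ⊓ a) ⊔ ((oc b ⊓ u) ⊔ (oc b ⊓ oc u)) := by ac_rfl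
      _ = (b ⊓ a) ⊔ oc b := by rw [← cmb'u.split]
  rw [hL]
  -- v side
  have cma1 : Cm a (a ⊓ b) := cm_of_ge inf_le_left
  have cma2 : Cm a (oc a ⊓ b) := ((cm_of_le (inf_le_left : oc a ⊓ b ≤ oc a)).ocr').symm
  have cma3 : Cm a (oc a ⊓ oc b) := ((cm_of_le (inf_le_left : oc a ⊓ oc b ≤ oc a)).ocr').symm
  have cmav : Cm a v := (cma1.supr cma2).supr cma3
  have hocv : oc v = ((oc a ⊔ oc b) ⊓ (a ⊔ oc b)) ⊓ (a ⊔ b) := by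
    rw [hv]; simp only [oc_sup, oc_inf, oc_oc]
  set d : α := oc a ⊓ ((a ⊔ oc b) ⊓ (a ⊔ b)) with hd
  have hv'a' : oc v ⊓ oc a = d := by
    rw [hocv, hd]
    apply le_antisymm
    · exact le_inf inf_le_right
        (le_inf (le_trans inf_le_left (le_trans inf_le_left inf_le_right))
          (le_trans inf_le_left inf_le_right))
    · exact le_inf (le_inf (le_inf (le_sup_left.trans' inf_le_left)
        (inf_le_right.trans inf_le_left))
        (inf_le_right.trans inf_le_right)) inf_le_left
  have hw : ((v ⊓ a) ⊔ (oc v ⊓ a)) ⊔ (oc v ⊓ oc a) = a ⊔ d := by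
    rw [hv'a', inf_comm v a, inf_comm (oc v) a, ← cmav.split]
  rw [hw]
  -- R5 : qimp 5 (a ⊔ d) b
  have hocw : oc (a ⊔ d) = (oc a ⊓ b) ⊔ (oc a ⊓ oc b) := by
    rw [hd]
    simp only [oc_sup, oc_inf, oc_oc]
    have c0 : Cm (oc a) a := (cm_oc_self a).symm
    have c1 : Cm (oc a) (oc a ⊓ b) := cm_of_ge inf_le_left
    have c2 : Cm (oc a) (oc a ⊓ oc b) := cm_of_ge inf_le_left
    calc oc a ⊓ (a ⊔ ((oc a ⊓ b) ⊔ (oc a ⊓ oc b)))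
        = oc a ⊓ ((a ⊔ (oc a ⊓ b)) ⊔ (oc a ⊓ oc b)) := by rw [sup_assoc]
      _ = ((oc a ⊓ a) ⊔ (oc a ⊓ (oc a ⊓ b))) ⊔ (oc a ⊓ (oc a ⊓ oc b)) := by
          rw [Cm.inf_sup3 c0 c1 c2]
      _ = (oc a ⊓ b) ⊔ (oc a ⊓ oc b) := by
          rw [inf_oc', ← inf_assoc, inf_idem, ← inf_assoc, inf_idem, bot_sup_eq]
  have cmbw : Cm b (a ⊔ d) := by
    have h : Cm b ((oc a ⊓ b) ⊔ (oc a ⊓ oc b)) :=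
      (cm_of_ge inf_le_right).supr ((cm_of_le (inf_le_right : oc a ⊓ oc b ≤ oc b)).ocr').symm
    rw [← hocw] at h
    exact h.ocr'
  have hw'b : oc (a ⊔ d) ⊓ b = oc a ⊓ b := by
    rw [hocw, inf_comm _ b,
      (cm_of_ge inf_le_right).inf_sup ((cm_of_le (inf_le_right : oc a ⊓ oc b ≤ oc b)).ocr').symm]
    have z1 : b ⊓ (oc a ⊓ b) = oc a ⊓ b := by
      rw [inf_comm (oc a) b, ← inf_assoc, inf_idem, inf_comm]
    have z2 : b ⊓ (oc a ⊓ oc b) = ⊥ :=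
      bot_of_le_le inf_le_left (le_trans inf_le_right inf_le_right)
    rw [z1, z2, sup_bot_eq]
  have hw'b' : oc (a ⊔ d) ⊓ oc b = oc a ⊓ oc b := by
    have c1 : Cm (oc b) (oc a ⊓ b) := ((cm_of_le (inf_le_right : oc a ⊓ b ≤ b)).ocr).symm
    have c2 : Cm (oc b) (oc a ⊓ oc b) := cm_of_ge inf_le_right
    rw [hocw, inf_comm _ (oc b), c1.inf_sup c2]
    have z1 : oc b ⊓ (oc a ⊓ b) = ⊥ :=
      bot_of_le_le (le_trans inf_le_right inf_le_right) inf_le_left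
    have z2 : oc b ⊓ (oc a ⊓ oc b) = oc a ⊓ oc b := by
      rw [inf_comm (oc a) (oc b), ← inf_assoc, inf_idem, inf_comm]
    rw [z1, z2, bot_sup_eq]
  have hR : (((a ⊔ d) ⊓ b) ⊔ (oc (a ⊔ d) ⊓ b)) ⊔ (oc (a ⊔ d) ⊓ oc b) = b ⊔ (oc a ⊓ oc b) := by
    rw [hw'b']
    calc (((a ⊔ d) ⊓ b) ⊔ (oc (a ⊔ d) ⊓ b)) ⊔ (oc a ⊓ oc b)
        = ((b ⊓ (a ⊔ d)) ⊔ (b ⊓ oc (a ⊔ d))) ⊔ (oc a ⊓ oc b) := by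
          rw [inf_comm (a ⊔ d) b, inf_comm (oc (a ⊔ d)) b]
      _ = b ⊔ (oc a ⊓ oc b) := by rw [← cmbw.split]
  rw [hR]
  -- final : qimp 5 ((b ⊓ a) ⊔ oc b) (b ⊔ (oc a ⊓ oc b))
  set l : α := (b ⊓ a) ⊔ oc b with hl
  set t : α := b ⊔ (oc a ⊓ oc b) with ht
  have cmtl : Cm t l := by
    have h1 : Cm t (b ⊓ a) :=
      (cm_of_le ((inf_le_left : b ⊓ a ≤ b).trans le_sup_left)).symm
    have h2 : Cm t (oc b) := ((cm_of_le (le_sup_left : b ≤ t)).symm).ocr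
    exact h1.supr h2
  have hocl : oc l = (oc b ⊔ oc a) ⊓ b := by
    rw [hl]; simp only [oc_sup, oc_inf, oc_oc]
  have hle : oc l ≤ b := by rw [hocl]; exact inf_le_right
  have hoct : oc t = oc b ⊓ (a ⊔ b) := by
    rw [ht]; simp only [oc_sup, oc_inf, oc_oc]
  have hz : oc l ⊓ oc t = ⊥ := by
    rw [hoct]
    exact bot_of_le_le (x := b) (le_trans inf_le_left hle)
      (le_trans inf_le_right inf_le_left)
  calc ((l ⊓ t) ⊔ (oc l ⊓ t)) ⊔ (oc l ⊓ oc t)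
      = (t ⊓ l) ⊔ (t ⊓ oc l) := by
        rw [hz, sup_bot_eq, inf_comm l t, inf_comm (oc l) t]
    _ = t := cmtl.split.symm

/-! ### Case 4 : commutator infrastructure -/

/-- helper: x ⊓ y = (x⊓c ⊓ (y⊓c)) ⊔ (x⊓c' ⊓ (y⊓c')) when both commute with c -/
lemma inf_split {x y c : α} (hx : Cm x c) (hy : Cm y c) :
    x ⊓ y = ((x ⊓ c) ⊓ (y ⊓ c)) ⊔ ((x ⊓ oc c) ⊓ (y ⊓ oc c)) := by
  have h : Cm (x ⊓ y) c := ((hx.symm).infr (hy.symm)).symm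
  have h1 : (x ⊓ y) ⊓ c = (x ⊓ c) ⊓ (y ⊓ c) := by
    rw [show (x ⊓ y) ⊓ c = (x ⊓ y) ⊓ (c ⊓ c) by rw [inf_idem]]
    ac_rfl
  have h2 : (x ⊓ y) ⊓ oc c = (x ⊓ oc c) ⊓ (y ⊓ oc c) := by
    rw [show (x ⊓ y) ⊓ oc c = (x ⊓ y) ⊓ (oc c ⊓ oc c) by rw [inf_idem]]
    ac_rfl
  rw [← h1, ← h2]
  exact h.split

/-- the commutator of a and b -/
def comm4 (a b : α) : α := ((a ⊓ b) ⊔ (a ⊓ oc b)) ⊔ ((oc a ⊓ b) ⊔ (oc a ⊓ oc b))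

lemma comm4_symm (a b : α) : comm4 a b = comm4 b a := by
  unfold comm4; ac_rfl

lemma comm4_ocl (a b : α) : comm4 (oc a) b = comm4 a b := by
  unfold comm4; rw [oc_oc]; ac_rfl

lemma comm4_ocr (a b : α) : comm4 a (oc b) = comm4 a b := by
  unfold comm4; rw [oc_oc]; ac_rfl

lemma cm_comm4 (a b : α) : Cm a (comm4 a b) := by
  unfold comm4
  exact ((cm_of_ge inf_le_left).supr (cm_of_ge inf_le_left)).supr
    (((cm_of_le_oc (inf_le_left : oc a ⊓ b ≤ oc a)).symm).supr
      ((cm_of_le_oc (inf_le_left : oc a ⊓ oc b ≤ oc a)).symm))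

lemma cm_comm4' (a b : α) : Cm b (comm4 a b) := by
  rw [comm4_symm]; exact cm_comm4 b a

lemma inf_le_comm4 (a b : α) : a ⊓ b ≤ comm4 a b :=
  le_sup_left.trans le_sup_left

lemma inf_comm4 (a b : α) : a ⊓ comm4 a b = (a ⊓ b) ⊔ (a ⊓ oc b) := by
  unfold comm4
  have c1 : Cm a (a ⊓ b) := cm_of_ge inf_le_left
  have c2 : Cm a (a ⊓ oc b) := cm_of_ge inf_le_left
  have c3 : Cm a (oc a ⊓ b) := (cm_of_le_oc (inf_le_left : oc a ⊓ b ≤ oc a)).symm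
  have c4 : Cm a (oc a ⊓ oc b) := (cm_of_le_oc (inf_le_left : oc a ⊓ oc b ≤ oc a)).symm
  rw [(c1.supr c2).inf_sup (c3.supr c4), c1.inf_sup c2, c3.inf_sup c4]
  have z1 : a ⊓ (a ⊓ b) = a ⊓ b := by rw [← inf_assoc, inf_idem]
  have z2 : a ⊓ (a ⊓ oc b) = a ⊓ oc b := by rw [← inf_assoc, inf_idem]
  have z3 : a ⊓ (oc a ⊓ b) = ⊥ :=
    bot_of_le_le inf_le_left (le_trans inf_le_right inf_le_left)
  have z4 : a ⊓ (oc a ⊓ oc b) = ⊥ :=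
    bot_of_le_le inf_le_left (le_trans inf_le_right inf_le_left)
  rw [z1, z2, z3, z4, sup_bot_eq, sup_bot_eq]

lemma oc_comm4_le (a b : α) : oc (comm4 a b) ≤ a ⊔ b := by
  have h : oc a ⊓ oc b ≤ comm4 a b := le_sup_right.trans le_sup_right
  have := oc_le_oc h
  rwa [oc_inf, oc_oc, oc_oc] at this

lemma mo2_comm4 (a b : α) :
    (a ⊓ oc (comm4 a b)) ⊔ (b ⊓ oc (comm4 a b)) = oc (comm4 a b) :=
  mo2_join (cm_comm4 a b).symm (cm_comm4' a b).symm
    (le_sup_right.trans le_sup_right)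

section Q4
variable (a b : α)

/-- normal form of `qimp 4 b a` -/
lemma q4_u :
    ((b ⊓ a) ⊔ (oc b ⊓ a)) ⊔ ((oc b ⊔ a) ⊓ oc a) =
      (((a ⊓ b) ⊔ (a ⊓ oc b)) ⊔ (oc a ⊓ oc b)) ⊔ (oc a ⊓ oc (comm4 a b)) := by
  have hsplit : oc a = (oc a ⊓ comm4 a b) ⊔ (oc a ⊓ oc (comm4 a b)) :=
    (cm_comm4 a b).ocl.split
  have ha'c : oc a ⊓ comm4 a b = (oc a ⊓ b) ⊔ (oc a ⊓ oc b) := by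
    have := inf_comm4 (oc a) b
    rwa [comm4_ocl] at this
  have hocle : oc (comm4 a b) ≤ a ⊔ oc b := by
    have := oc_comm4_le a (oc b)
    rwa [comm4_ocr] at this
  have cs1 : Cm (oc a ⊓ b) (a ⊔ oc b) := cm_of_le_oc (by rw [oc_sup, oc_oc])
  have cs2 : Cm (oc a ⊓ oc b) (a ⊔ oc b) := cm_of_le (inf_le_right.trans le_sup_right)
  have cs3 : Cm (oc a ⊓ oc (comm4 a b)) (a ⊔ oc b) :=
    cm_of_le (inf_le_right.trans hocle)
  have hg : (oc b ⊔ a) ⊓ oc a = (oc a ⊓ oc b) ⊔ (oc a ⊓ oc (comm4 a b)) := by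
    calc (oc b ⊔ a) ⊓ oc a = oc a ⊓ (a ⊔ oc b) := by ac_rfl
      _ = (((oc a ⊓ b) ⊔ (oc a ⊓ oc b)) ⊔ (oc a ⊓ oc (comm4 a b))) ⊓ (a ⊔ oc b) := by
          conv_lhs => rw [hsplit, ha'c]
      _ = (((a ⊔ oc b) ⊓ (oc a ⊓ b)) ⊔ ((a ⊔ oc b) ⊓ (oc a ⊓ oc b))) ⊔
            ((a ⊔ oc b) ⊓ (oc a ⊓ oc (comm4 a b))) := by
          rw [inf_comm, Cm.inf_sup3 cs1.symm cs2.symm cs3.symm]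
      _ = (oc a ⊓ oc b) ⊔ (oc a ⊓ oc (comm4 a b)) := by
          have z1 : (a ⊔ oc b) ⊓ (oc a ⊓ b) = ⊥ :=
            bot_of_le_le (x := a ⊔ oc b) inf_le_left
              (inf_le_right.trans (by rw [oc_sup, oc_oc]))
          have z2 : (a ⊔ oc b) ⊓ (oc a ⊓ oc b) = oc a ⊓ oc b :=
            inf_eq_right.mpr (inf_le_right.trans le_sup_right)
          have z3 : (a ⊔ oc b) ⊓ (oc a ⊓ oc (comm4 a b)) = oc a ⊓ oc (comm4 a b) :=
            inf_eq_right.mpr (inf_le_right.trans hocle)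
          rw [z1, z2, z3, bot_sup_eq]
  rw [hg]
  ac_rfl

/-- c-part of the normal form -/
lemma q4_N_c :
    ((((a ⊓ b) ⊔ (a ⊓ oc b)) ⊔ (oc a ⊓ oc b)) ⊔ (oc a ⊓ oc (comm4 a b))) ⊓ comm4 a b =
      ((a ⊓ b) ⊔ (a ⊓ oc b)) ⊔ (oc a ⊓ oc b) := by
  have le1 : a ⊓ b ≤ comm4 a b := inf_le_comm4 a b
  have le2 : a ⊓ oc b ≤ comm4 a b := by
    have := inf_le_comm4 a (oc b); rwa [comm4_ocr] at this
  have le4 : oc a ⊓ oc b ≤ comm4 a b := by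
    have := inf_le_comm4 (oc a) (oc b); rwa [comm4_ocl, comm4_ocr] at this
  have c1 : Cm (comm4 a b) (a ⊓ b) := (cm_of_le le1).symm
  have c2 : Cm (comm4 a b) (a ⊓ oc b) := (cm_of_le le2).symm
  have c4 : Cm (comm4 a b) (oc a ⊓ oc b) := (cm_of_le le4).symm
  have cm' : Cm (comm4 a b) (oc a ⊓ oc (comm4 a b)) :=
    (cm_of_le_oc (inf_le_right : oc a ⊓ oc (comm4 a b) ≤ oc (comm4 a b))).symm
  rw [inf_comm, Cm.inf_sup3 (c1.supr c2) c4 cm', c1.inf_sup c2]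
  have z1 : comm4 a b ⊓ (a ⊓ b) = a ⊓ b := inf_eq_right.mpr le1
  have z2 : comm4 a b ⊓ (a ⊓ oc b) = a ⊓ oc b := inf_eq_right.mpr le2
  have z4 : comm4 a b ⊓ (oc a ⊓ oc b) = oc a ⊓ oc b := inf_eq_right.mpr le4
  have z5 : comm4 a b ⊓ (oc a ⊓ oc (comm4 a b)) = ⊥ :=
    bot_of_le_le inf_le_left (inf_le_right.trans inf_le_right)
  rw [z1, z2, z4, z5, sup_bot_eq]

/-- c'-part of the normal form -/
lemma q4_N_c' :
    ((((a ⊓ b) ⊔ (a ⊓ oc b)) ⊔ (oc a ⊓ oc b)) ⊔ (oc a ⊓ oc (comm4 a b))) ⊓ oc (comm4 a b) =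
      oc a ⊓ oc (comm4 a b) := by
  have le1 : a ⊓ b ≤ comm4 a b := inf_le_comm4 a b
  have le2 : a ⊓ oc b ≤ comm4 a b := by
    have := inf_le_comm4 a (oc b); rwa [comm4_ocr] at this
  have le4 : oc a ⊓ oc b ≤ comm4 a b := by
    have := inf_le_comm4 (oc a) (oc b); rwa [comm4_ocl, comm4_ocr] at this
  have c1 : Cm (oc (comm4 a b)) (a ⊓ b) := (cm_of_le le1).symm.ocl
  have c2 : Cm (oc (comm4 a b)) (a ⊓ oc b) := (cm_of_le le2).symm.ocl
  have c4 : Cm (oc (comm4 a b)) (oc a ⊓ oc b) := (cm_of_le le4).symm.ocl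
  have cm' : Cm (oc (comm4 a b)) (oc a ⊓ oc (comm4 a b)) :=
    (cm_of_le (inf_le_right : oc a ⊓ oc (comm4 a b) ≤ oc (comm4 a b))).symm
  rw [inf_comm, Cm.inf_sup3 (c1.supr c2) c4 cm', c1.inf_sup c2]
  have z1 : oc (comm4 a b) ⊓ (a ⊓ b) = ⊥ :=
    bot_of_le_le (x := comm4 a b) (inf_le_right.trans le1) inf_le_left
  have z2 : oc (comm4 a b) ⊓ (a ⊓ oc b) = ⊥ :=
    bot_of_le_le (x := comm4 a b) (inf_le_right.trans le2) inf_le_left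
  have z4 : oc (comm4 a b) ⊓ (oc a ⊓ oc b) = ⊥ :=
    bot_of_le_le (x := comm4 a b) (inf_le_right.trans le4) inf_le_left
  have z5 : oc (comm4 a b) ⊓ (oc a ⊓ oc (comm4 a b)) = oc a ⊓ oc (comm4 a b) :=
    inf_eq_right.mpr inf_le_right
  rw [z1, z2, z4, z5, bot_sup_eq, bot_sup_eq, bot_sup_eq]

/-- Cm of comm4 with the normal form -/
lemma q4_cm_c_N :
    Cm (comm4 a b) ((((a ⊓ b) ⊔ (a ⊓ oc b)) ⊔ (oc a ⊓ oc b)) ⊔ (oc a ⊓ oc (comm4 a b))) := by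
  have le1 : a ⊓ b ≤ comm4 a b := inf_le_comm4 a b
  have le2 : a ⊓ oc b ≤ comm4 a b := by
    have := inf_le_comm4 a (oc b); rwa [comm4_ocr] at this
  have le4 : oc a ⊓ oc b ≤ comm4 a b := by
    have := inf_le_comm4 (oc a) (oc b); rwa [comm4_ocl, comm4_ocr] at this
  exact (((cm_of_le le1).symm.supr (cm_of_le le2).symm).supr (cm_of_le le4).symm).supr
    (cm_of_le_oc (inf_le_right : oc a ⊓ oc (comm4 a b) ≤ oc (comm4 a b))).symm

end Q4

section Q4b
variable (a b : α)

lemma q4_b_N :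
    b ⊓ ((((a ⊓ b) ⊔ (a ⊓ oc b)) ⊔ (oc a ⊓ oc b)) ⊔ (oc a ⊓ oc (comm4 a b))) = a ⊓ b := by
  set N : α := (((a ⊓ b) ⊔ (a ⊓ oc b)) ⊔ (oc a ⊓ oc b)) ⊔ (oc a ⊓ oc (comm4 a b)) with hN
  have le3 : oc a ⊓ b ≤ comm4 a b := by
    have := inf_le_comm4 (oc a) b; rwa [comm4_ocl] at this
  have cmsplit : Cm (b ⊓ N) (comm4 a b) :=
    ((cm_comm4' a b).symm.infr (q4_cm_c_N a b)).symm
  have h1 : (b ⊓ N) ⊓ comm4 a b = a ⊓ b := by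
    rw [inf_assoc, hN, q4_N_c]
    have c1 : Cm b (a ⊓ b) := cm_of_ge inf_le_right
    have c2 : Cm b (a ⊓ oc b) := (cm_of_le_oc (inf_le_right : a ⊓ oc b ≤ oc b)).symm
    have c4 : Cm b (oc a ⊓ oc b) := (cm_of_le_oc (inf_le_right : oc a ⊓ oc b ≤ oc b)).symm
    rw [Cm.inf_sup3 c1 c2 c4]
    have z1 : b ⊓ (a ⊓ b) = a ⊓ b := by
      rw [show b ⊓ (a ⊓ b) = a ⊓ (b ⊓ b) from by ac_rfl, inf_idem]
    have z2 : b ⊓ (a ⊓ oc b) = ⊥ :=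
      bot_of_le_le inf_le_left (inf_le_right.trans inf_le_right)
    have z4 : b ⊓ (oc a ⊓ oc b) = ⊥ :=
      bot_of_le_le inf_le_left (inf_le_right.trans inf_le_right)
    rw [z1, z2, z4, sup_bot_eq, sup_bot_eq]
  have h2 : (b ⊓ N) ⊓ oc (comm4 a b) = ⊥ := by
    rw [inf_assoc, hN, q4_N_c']
    refine bot_of_le_le (x := comm4 a b) ?_ (inf_le_right.trans inf_le_right)
    exact le_trans (le_inf (inf_le_right.trans inf_le_left) inf_le_left) le3
  have h := cmsplit.split
  rw [h1, h2, sup_bot_eq] at h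
  exact h

lemma q4_b'_N :
    oc b ⊓ ((((a ⊓ b) ⊔ (a ⊓ oc b)) ⊔ (oc a ⊓ oc b)) ⊔ (oc a ⊓ oc (comm4 a b))) =
      (a ⊓ oc b) ⊔ (oc a ⊓ oc b) := by
  set N : α := (((a ⊓ b) ⊔ (a ⊓ oc b)) ⊔ (oc a ⊓ oc b)) ⊔ (oc a ⊓ oc (comm4 a b)) with hN
  have le4 : oc a ⊓ oc b ≤ comm4 a b := by
    have := inf_le_comm4 (oc a) (oc b); rwa [comm4_ocl, comm4_ocr] at this
  have cmsplit : Cm (oc b ⊓ N) (comm4 a b) :=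
    (((cm_comm4' a b).symm.ocr).infr (q4_cm_c_N a b)).symm
  have h1 : (oc b ⊓ N) ⊓ comm4 a b = (a ⊓ oc b) ⊔ (oc a ⊓ oc b) := by
    rw [inf_assoc, hN, q4_N_c]
    have c1 : Cm (oc b) (a ⊓ b) := ((cm_of_le (inf_le_right : a ⊓ b ≤ b)).ocr).symm
    have c2 : Cm (oc b) (a ⊓ oc b) := cm_of_ge inf_le_right
    have c4 : Cm (oc b) (oc a ⊓ oc b) := cm_of_ge inf_le_right
    rw [Cm.inf_sup3 c1 c2 c4]
    have z1 : oc b ⊓ (a ⊓ b) = ⊥ :=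
      bot_of_le_le (x := b) (inf_le_right.trans inf_le_right) inf_le_left
    have z2 : oc b ⊓ (a ⊓ oc b) = a ⊓ oc b := by
      rw [show oc b ⊓ (a ⊓ oc b) = a ⊓ (oc b ⊓ oc b) from by ac_rfl, inf_idem]
    have z4 : oc b ⊓ (oc a ⊓ oc b) = oc a ⊓ oc b := by
      rw [show oc b ⊓ (oc a ⊓ oc b) = oc a ⊓ (oc b ⊓ oc b) from by ac_rfl, inf_idem]
    rw [z1, z2, z4, bot_sup_eq]
  have h2 : (oc b ⊓ N) ⊓ oc (comm4 a b) = ⊥ := by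
    rw [inf_assoc, hN, q4_N_c']
    refine bot_of_le_le (x := comm4 a b) ?_ (inf_le_right.trans inf_le_right)
    exact le_trans (le_inf (inf_le_right.trans inf_le_left) inf_le_left) le4
  have h := cmsplit.split
  rw [h1, h2, sup_bot_eq] at h
  exact h

lemma q4_mo2_self :
    (a ⊓ oc (comm4 a b)) ⊔ (oc a ⊓ oc (comm4 a b)) = oc (comm4 a b) := by
  refine mo2_join (cm_comm4 a b).symm ((cm_comm4 a b).symm.ocr) ?_
  rw [oc_oc]
  exact le_trans (le_of_eq (inf_oc' a)) bot_le

lemma q4_oc_N :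
    oc ((((a ⊓ b) ⊔ (a ⊓ oc b)) ⊔ (oc a ⊓ oc b)) ⊔ (oc a ⊓ oc (comm4 a b))) =
      (oc a ⊓ b) ⊔ (a ⊓ oc (comm4 a b)) := by
  set N : α := (((a ⊓ b) ⊔ (a ⊓ oc b)) ⊔ (oc a ⊓ oc b)) ⊔ (oc a ⊓ oc (comm4 a b)) with hN
  have le1 : a ⊓ b ≤ comm4 a b := inf_le_comm4 a b
  have le2 : a ⊓ oc b ≤ comm4 a b := by
    have := inf_le_comm4 a (oc b); rwa [comm4_ocr] at this
  have le3 : oc a ⊓ b ≤ comm4 a b := by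
    have := inf_le_comm4 (oc a) b; rwa [comm4_ocl] at this
  have le4 : oc a ⊓ oc b ≤ comm4 a b := by
    have := inf_le_comm4 (oc a) (oc b); rwa [comm4_ocl, comm4_ocr] at this
  -- commutation of oc a ⊓ b with N
  have ce3a : Cm (oc a ⊓ b) a := (cm_of_le (inf_le_left : oc a ⊓ b ≤ oc a)).ocr'
  have ce3b : Cm (oc a ⊓ b) b := cm_of_le inf_le_right
  have ce3a' : Cm (oc a ⊓ b) (oc a) := cm_of_le inf_le_left
  have ce3b' : Cm (oc a ⊓ b) (oc b) := ce3b.ocr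
  have ce3c' : Cm (oc a ⊓ b) (oc (comm4 a b)) := (cm_of_le le3).ocr
  have cmE3N : Cm (oc a ⊓ b) N := by
    rw [hN]
    exact (((ce3a.infr ce3b).supr (ce3a.infr ce3b')).supr (ce3a'.infr ce3b')).supr
      (ce3a'.infr ce3c')
  -- commutation of a ⊓ oc (comm4 a b) with N
  have cmAC1 : Cm (a ⊓ oc (comm4 a b)) (a ⊓ b) :=
    ((cm_of_le (inf_le_left : a ⊓ b ≤ a)).infr ((cm_of_le le1).ocr)).symm
  have cmAC2 : Cm (a ⊓ oc (comm4 a b)) (a ⊓ oc b) :=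
    ((cm_of_le (inf_le_left : a ⊓ oc b ≤ a)).infr ((cm_of_le le2).ocr)).symm
  have cmAC4 : Cm (a ⊓ oc (comm4 a b)) (oc a ⊓ oc b) :=
    (((cm_of_le (inf_le_left : oc a ⊓ oc b ≤ oc a)).ocr').infr ((cm_of_le le4).ocr)).symm
  have cmAC5 : Cm (a ⊓ oc (comm4 a b)) (oc a ⊓ oc (comm4 a b)) :=
    ((cm_of_le (inf_le_left : a ⊓ oc (comm4 a b) ≤ a)).ocr).infr
      (cm_of_le (inf_le_right : a ⊓ oc (comm4 a b) ≤ oc (comm4 a b)))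
  have cmACN : Cm (a ⊓ oc (comm4 a b)) N := by
    rw [hN]
    exact ((cmAC1.supr cmAC2).supr cmAC4).supr cmAC5
  -- the candidate complement
  have hcm : Cm ((oc a ⊓ b) ⊔ (a ⊓ oc (comm4 a b))) N :=
    ((cmE3N.symm).supr (cmACN.symm)).symm
  have hbot : N ⊓ ((oc a ⊓ b) ⊔ (a ⊓ oc (comm4 a b))) = ⊥ := by
    rw [(cmE3N.symm).inf_sup (cmACN.symm)]
    have hb1 : N ⊓ (oc a ⊓ b) = ⊥ := by
      rw [inf_comm, hN, Cm.inf_sup3 ((ce3a.infr ce3b).supr (ce3a.infr ce3b'))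
        (ce3a'.infr ce3b') (ce3a'.infr ce3c'), (ce3a.infr ce3b).inf_sup (ce3a.infr ce3b')]
      have z1 : (oc a ⊓ b) ⊓ (a ⊓ b) = ⊥ :=
        bot_of_le_le (x := a) (inf_le_right.trans inf_le_left) (inf_le_left.trans inf_le_left)
      have z2 : (oc a ⊓ b) ⊓ (a ⊓ oc b) = ⊥ :=
        bot_of_le_le (x := a) (inf_le_right.trans inf_le_left) (inf_le_left.trans inf_le_left)
      have z3 : (oc a ⊓ b) ⊓ (oc a ⊓ oc b) = ⊥ :=
        bot_of_le_le (x := b) (inf_le_left.trans inf_le_right) (inf_le_right.trans inf_le_right)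
      have z4 : (oc a ⊓ b) ⊓ (oc a ⊓ oc (comm4 a b)) = ⊥ :=
        bot_of_le_le (x := comm4 a b) (inf_le_left.trans le3)
          (inf_le_right.trans inf_le_right)
      rw [z1, z2, z3, z4]
      simp
    have hb2 : N ⊓ (a ⊓ oc (comm4 a b)) = ⊥ := by
      rw [inf_comm, hN, Cm.inf_sup3 (cmAC1.supr cmAC2) cmAC4 cmAC5,
        cmAC1.inf_sup cmAC2]
      have z1 : (a ⊓ oc (comm4 a b)) ⊓ (a ⊓ b) = ⊥ :=
        bot_of_le_le (x := comm4 a b) (inf_le_right.trans le1)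
          (inf_le_left.trans inf_le_right)
      have z2 : (a ⊓ oc (comm4 a b)) ⊓ (a ⊓ oc b) = ⊥ :=
        bot_of_le_le (x := comm4 a b) (inf_le_right.trans le2)
          (inf_le_left.trans inf_le_right)
      have z3 : (a ⊓ oc (comm4 a b)) ⊓ (oc a ⊓ oc b) = ⊥ :=
        bot_of_le_le (x := a) (inf_le_left.trans inf_le_left)
          (inf_le_right.trans inf_le_left)
      have z4 : (a ⊓ oc (comm4 a b)) ⊓ (oc a ⊓ oc (comm4 a b)) = ⊥ :=
        bot_of_le_le (x := a) (inf_le_left.trans inf_le_left)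
          (inf_le_right.trans inf_le_left)
      rw [z1, z2, z3, z4]
      simp
    rw [hb1, hb2, sup_bot_eq]
  have htop : N ⊔ ((oc a ⊓ b) ⊔ (a ⊓ oc (comm4 a b))) = ⊤ := by
    have hdef : comm4 a b = ((a ⊓ b) ⊔ (a ⊓ oc b)) ⊔ ((oc a ⊓ b) ⊔ (oc a ⊓ oc b)) := rfl
    calc N ⊔ ((oc a ⊓ b) ⊔ (a ⊓ oc (comm4 a b)))
        = (((a ⊓ b) ⊔ (a ⊓ oc b)) ⊔ ((oc a ⊓ b) ⊔ (oc a ⊓ oc b))) ⊔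
            ((a ⊓ oc (comm4 a b)) ⊔ (oc a ⊓ oc (comm4 a b))) := by rw [hN]; ac_rfl
      _ = comm4 a b ⊔ oc (comm4 a b) := by rw [← hdef, q4_mo2_self]
      _ = ⊤ := sup_oc _
  exact (eq_oc_of_cm hcm hbot htop).symm

end Q4b

section Q4c
variable (a b : α)

lemma q4_L :
    ((b ⊓ (((b ⊓ a) ⊔ (oc b ⊓ a)) ⊔ ((oc b ⊔ a) ⊓ oc a))) ⊔
      (oc b ⊓ (((b ⊓ a) ⊔ (oc b ⊓ a)) ⊔ ((oc b ⊔ a) ⊓ oc a)))) ⊔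
      ((oc b ⊔ (((b ⊓ a) ⊔ (oc b ⊓ a)) ⊔ ((oc b ⊔ a) ⊓ oc a))) ⊓
        oc (((b ⊓ a) ⊔ (oc b ⊓ a)) ⊔ ((oc b ⊔ a) ⊓ oc a))) =
      a ⊔ (oc a ⊓ oc b) := by
  rw [q4_u a b]
  set N : α := (((a ⊓ b) ⊔ (a ⊓ oc b)) ⊔ (oc a ⊓ oc b)) ⊔ (oc a ⊓ oc (comm4 a b)) with hN
  have le3 : oc a ⊓ b ≤ comm4 a b := by
    have := inf_le_comm4 (oc a) b; rwa [comm4_ocl] at this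
  have le1 : a ⊓ b ≤ comm4 a b := inf_le_comm4 a b
  have le2 : a ⊓ oc b ≤ comm4 a b := by
    have := inf_le_comm4 a (oc b); rwa [comm4_ocr] at this
  have le4 : oc a ⊓ oc b ≤ comm4 a b := by
    have := inf_le_comm4 (oc a) (oc b); rwa [comm4_ocl, comm4_ocr] at this
  have ce3a : Cm (oc a ⊓ b) a := (cm_of_le (inf_le_left : oc a ⊓ b ≤ oc a)).ocr'
  have ce3b : Cm (oc a ⊓ b) b := cm_of_le inf_le_right
  have ce3a' : Cm (oc a ⊓ b) (oc a) := cm_of_le inf_le_left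
  have ce3b' : Cm (oc a ⊓ b) (oc b) := ce3b.ocr
  have ce3c' : Cm (oc a ⊓ b) (oc (comm4 a b)) := (cm_of_le le3).ocr
  have cmE3N : Cm (oc a ⊓ b) N := by
    rw [hN]
    exact (((ce3a.infr ce3b).supr (ce3a.infr ce3b')).supr (ce3a'.infr ce3b')).supr
      (ce3a'.infr ce3c')
  have hE3N : (oc a ⊓ b) ⊓ N = ⊥ := by
    rw [hN, Cm.inf_sup3 ((ce3a.infr ce3b).supr (ce3a.infr ce3b'))
      (ce3a'.infr ce3b') (ce3a'.infr ce3c'), (ce3a.infr ce3b).inf_sup (ce3a.infr ce3b')]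
    have z1 : (oc a ⊓ b) ⊓ (a ⊓ b) = ⊥ :=
      bot_of_le_le (x := a) (inf_le_right.trans inf_le_left) (inf_le_left.trans inf_le_left)
    have z2 : (oc a ⊓ b) ⊓ (a ⊓ oc b) = ⊥ :=
      bot_of_le_le (x := a) (inf_le_right.trans inf_le_left) (inf_le_left.trans inf_le_left)
    have z3 : (oc a ⊓ b) ⊓ (oc a ⊓ oc b) = ⊥ :=
      bot_of_le_le (x := b) (inf_le_left.trans inf_le_right) (inf_le_right.trans inf_le_right)
    have z4 : (oc a ⊓ b) ⊓ (oc a ⊓ oc (comm4 a b)) = ⊥ :=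
      bot_of_le_le (x := comm4 a b) (inf_le_left.trans le3)
        (inf_le_right.trans inf_le_right)
    rw [z1, z2, z3, z4]
    simp
  have mo2q : (oc a ⊓ oc (comm4 a b)) ⊔ (oc b ⊓ oc (comm4 a b)) = oc (comm4 a b) := by
    have := mo2_comm4 (oc a) (oc b); rwa [comm4_ocl, comm4_ocr] at this
  have hle : a ⊓ oc (comm4 a b) ≤ oc b ⊔ N := by
    refine inf_le_right.trans ?_
    rw [← mo2q]
    exact sup_le (le_sup_right.trans le_sup_right) (inf_le_left.trans le_sup_left)
  have hT3 : (oc b ⊔ N) ⊓ oc N = a ⊓ oc (comm4 a b) := by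
    rw [hN, q4_oc_N, ← hN]
    have cm1 : Cm (oc a ⊓ b) (oc b ⊔ N) := ce3b'.supr cmE3N
    rw [cm1.symm.inf_sup (cm_of_le hle).symm]
    have z1 : (oc b ⊔ N) ⊓ (oc a ⊓ b) = ⊥ := by
      rw [inf_comm, ce3b'.inf_sup cmE3N]
      have w1 : (oc a ⊓ b) ⊓ oc b = ⊥ :=
        bot_of_le_le (x := b) (inf_le_left.trans inf_le_right) inf_le_right
      rw [w1, hE3N, sup_idem]
    have z2 : (oc b ⊔ N) ⊓ (a ⊓ oc (comm4 a b)) = a ⊓ oc (comm4 a b) :=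
      inf_eq_right.mpr hle
    rw [z1, z2, bot_sup_eq]
  rw [hN, q4_b_N, q4_b'_N, ← hN, hT3]
  calc ((a ⊓ b) ⊔ ((a ⊓ oc b) ⊔ (oc a ⊓ oc b))) ⊔ (a ⊓ oc (comm4 a b))
      = (((a ⊓ b) ⊔ (a ⊓ oc b)) ⊔ (a ⊓ oc (comm4 a b))) ⊔ (oc a ⊓ oc b) := by ac_rfl
    _ = ((a ⊓ comm4 a b) ⊔ (a ⊓ oc (comm4 a b))) ⊔ (oc a ⊓ oc b) := by rw [inf_comm4]
    _ = a ⊔ (oc a ⊓ oc b) := by rw [← (cm_comm4 a b).split]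

end Q4c

section Q4d
variable (a b : α)

lemma q4_R14 :
    (((((a ⊓ b) ⊔ (oc a ⊓ b)) ⊔ ((oc a ⊔ b) ⊓ oc b)) ⊓ a) ⊔
      (oc (((a ⊓ b) ⊔ (oc a ⊓ b)) ⊔ ((oc a ⊔ b) ⊓ oc b)) ⊓ a)) ⊔
      ((oc (((a ⊓ b) ⊔ (oc a ⊓ b)) ⊔ ((oc a ⊔ b) ⊓ oc b)) ⊔ a) ⊓ oc a) =
      (a ⊓ comm4 a b) ⊔ (oc a ⊓ oc (comm4 a b)) := by
  have hM : ((a ⊓ b) ⊔ (oc a ⊓ b)) ⊔ ((oc a ⊔ b) ⊓ oc b) =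
      (((b ⊓ a) ⊔ (b ⊓ oc a)) ⊔ (oc b ⊓ oc a)) ⊔ (oc b ⊓ oc (comm4 a b)) := by
    have := q4_u b a
    rwa [← comm4_symm a b] at this
  rw [hM]
  set M : α := (((b ⊓ a) ⊔ (b ⊓ oc a)) ⊔ (oc b ⊓ oc a)) ⊔ (oc b ⊓ oc (comm4 a b)) with hMdef
  have hocM : oc M = (oc b ⊓ a) ⊔ (b ⊓ oc (comm4 a b)) := by
    have := q4_oc_N b a
    rwa [← comm4_symm a b] at this
  have hMa : M ⊓ a = b ⊓ a := by
    have := q4_b_N b a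
    rw [← comm4_symm a b] at this
    rw [inf_comm]
    exact this
  -- facts about comm4
  have le1 : a ⊓ b ≤ comm4 a b := inf_le_comm4 a b
  have le2 : a ⊓ oc b ≤ comm4 a b := by
    have := inf_le_comm4 a (oc b); rwa [comm4_ocr] at this
  have le3 : oc a ⊓ b ≤ comm4 a b := by
    have := inf_le_comm4 (oc a) b; rwa [comm4_ocl] at this
  have le2' : oc b ⊓ a ≤ comm4 a b := (le_inf inf_le_right inf_le_left).trans le2
  set J : α := (oc b ⊓ a) ⊔ (b ⊓ oc (comm4 a b)) with hJ
  have cmcJ : Cm (comm4 a b) J :=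
    (cm_of_le le2').symm.supr (cm_of_le_oc (inf_le_right : b ⊓ oc (comm4 a b) ≤ oc (comm4 a b))).symm
  have hJc : comm4 a b ⊓ J = oc b ⊓ a := by
    rw [hJ, (cm_of_le le2').symm.inf_sup
      (cm_of_le_oc (inf_le_right : b ⊓ oc (comm4 a b) ≤ oc (comm4 a b))).symm]
    have z1 : comm4 a b ⊓ (oc b ⊓ a) = oc b ⊓ a := inf_eq_right.mpr le2'
    have z2 : comm4 a b ⊓ (b ⊓ oc (comm4 a b)) = ⊥ :=
      bot_of_le_le inf_le_left (inf_le_right.trans inf_le_right)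
    rw [z1, z2, sup_bot_eq]
  have hJc' : oc (comm4 a b) ⊓ J = b ⊓ oc (comm4 a b) := by
    rw [hJ, ((cm_of_le le2').symm.ocl).inf_sup
      ((cm_of_le_oc (inf_le_right : b ⊓ oc (comm4 a b) ≤ oc (comm4 a b))).symm.ocl)]
    have z1 : oc (comm4 a b) ⊓ (oc b ⊓ a) = ⊥ :=
      bot_of_le_le (x := comm4 a b) (inf_le_right.trans le2') inf_le_left
    have z2 : oc (comm4 a b) ⊓ (b ⊓ oc (comm4 a b)) = b ⊓ oc (comm4 a b) :=
      inf_eq_right.mpr inf_le_right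
    rw [z1, z2, bot_sup_eq]
  -- J ⊓ a = a ⊓ oc b
  have hJa : J ⊓ a = a ⊓ oc b := by
    have cmsplit : Cm (J ⊓ a) (comm4 a b) :=
      (cmcJ.infr (cm_comm4 a b).symm).symm
    have h1 : (J ⊓ a) ⊓ comm4 a b = a ⊓ oc b := by
      rw [show (J ⊓ a) ⊓ comm4 a b = (comm4 a b ⊓ J) ⊓ a from by ac_rfl, hJc]
      rw [show (oc b ⊓ a) ⊓ a = oc b ⊓ (a ⊓ a) from by ac_rfl, inf_idem, inf_comm]
    have h2 : (J ⊓ a) ⊓ oc (comm4 a b) = ⊥ := by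
      rw [show (J ⊓ a) ⊓ oc (comm4 a b) = (oc (comm4 a b) ⊓ J) ⊓ a from by ac_rfl, hJc']
      refine bot_of_le_le (x := comm4 a b) ?_
        (inf_le_left.trans inf_le_right)
      exact le_trans (le_inf inf_le_right (inf_le_left.trans inf_le_left)) le1
    have h := cmsplit.split
    rw [h1, h2, sup_bot_eq] at h
    exact h
  -- (J ⊔ a) ⊓ oc a = oc a ⊓ oc (comm4 a b)
  have hKa : (J ⊔ a) ⊓ oc a = oc a ⊓ oc (comm4 a b) := by
    have cmcK : Cm (comm4 a b) (J ⊔ a) := cmcJ.supr (cm_comm4 a b).symm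
    have cmsplit : Cm ((J ⊔ a) ⊓ oc a) (comm4 a b) :=
      (cmcK.infr (cm_comm4 a b).symm.ocr).symm
    have hcK : comm4 a b ⊓ (J ⊔ a) = (oc b ⊓ a) ⊔ ((a ⊓ b) ⊔ (a ⊓ oc b)) := by
      rw [cmcJ.inf_sup (cm_comm4 a b).symm, hJc, inf_comm (comm4 a b) a, inf_comm4]
    have hc'K : oc (comm4 a b) ⊓ (J ⊔ a) = oc (comm4 a b) := by
      rw [cmcJ.ocl.inf_sup (cm_comm4 a b).symm.ocl, hJc']
      have z : oc (comm4 a b) ⊓ a = a ⊓ oc (comm4 a b) := inf_comm _ _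
      rw [z]
      have := mo2_comm4 a b
      calc (b ⊓ oc (comm4 a b)) ⊔ (a ⊓ oc (comm4 a b)) =
            (a ⊓ oc (comm4 a b)) ⊔ (b ⊓ oc (comm4 a b)) := by ac_rfl
        _ = oc (comm4 a b) := this
    have h1 : ((J ⊔ a) ⊓ oc a) ⊓ comm4 a b = ⊥ := by
      rw [show ((J ⊔ a) ⊓ oc a) ⊓ comm4 a b = (comm4 a b ⊓ (J ⊔ a)) ⊓ oc a from by ac_rfl,
        hcK]
      have c1 : Cm (oc a) (oc b ⊓ a) :=
        ((cm_of_le (inf_le_right : oc b ⊓ a ≤ a)).ocr).symm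
      have c2 : Cm (oc a) (a ⊓ b) := ((cm_of_le (inf_le_left : a ⊓ b ≤ a)).ocr).symm
      have c3 : Cm (oc a) (a ⊓ oc b) := ((cm_of_le (inf_le_left : a ⊓ oc b ≤ a)).ocr).symm
      rw [inf_comm, c1.inf_sup (c2.supr c3), c2.inf_sup c3]
      have z1 : oc a ⊓ (oc b ⊓ a) = ⊥ :=
        bot_of_le_le (x := a) (inf_le_right.trans inf_le_right) inf_le_left
      have z2 : oc a ⊓ (a ⊓ b) = ⊥ :=
        bot_of_le_le (x := a) (inf_le_right.trans inf_le_left) inf_le_left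
      have z3 : oc a ⊓ (a ⊓ oc b) = ⊥ :=
        bot_of_le_le (x := a) (inf_le_right.trans inf_le_left) inf_le_left
      rw [z1, z2, z3]
      simp
    have h2 : ((J ⊔ a) ⊓ oc a) ⊓ oc (comm4 a b) = oc a ⊓ oc (comm4 a b) := by
      rw [show ((J ⊔ a) ⊓ oc a) ⊓ oc (comm4 a b) = (oc (comm4 a b) ⊓ (J ⊔ a)) ⊓ oc a
        from by ac_rfl, hc'K, inf_comm]
    have h := cmsplit.split
    rw [h1, h2, bot_sup_eq] at h
    exact h
  rw [hocM, hMa, hJa, hKa]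
  calc ((b ⊓ a) ⊔ (a ⊓ oc b)) ⊔ (oc a ⊓ oc (comm4 a b))
      = ((a ⊓ b) ⊔ (a ⊓ oc b)) ⊔ (oc a ⊓ oc (comm4 a b)) := by ac_rfl
    _ = (a ⊓ comm4 a b) ⊔ (oc a ⊓ oc (comm4 a b)) := by rw [inf_comm4]

end Q4d

section Q4e
variable (a b : α)

lemma q4_ha'c : oc a ⊓ comm4 a b = (oc a ⊓ b) ⊔ (oc a ⊓ oc b) := by
  have := inf_comm4 (oc a) b
  rwa [comm4_ocl] at this

lemma q4_hbc : b ⊓ comm4 a b = (b ⊓ a) ⊔ (b ⊓ oc a) := by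
  have := inf_comm4 b a
  rwa [← comm4_symm a b] at this

lemma q4_ocW :
    oc ((a ⊓ comm4 a b) ⊔ (oc a ⊓ oc (comm4 a b))) =
      (oc a ⊓ comm4 a b) ⊔ (a ⊓ oc (comm4 a b)) := by
  set c : α := comm4 a b with hc
  set W : α := (a ⊓ c) ⊔ (oc a ⊓ oc c) with hW
  set y0 : α := (oc a ⊓ c) ⊔ (a ⊓ oc c) with hy0
  have cm1 : Cm (a ⊓ c) (oc a ⊓ c) :=
    ((cm_of_le inf_le_left).ocr).infr (cm_of_le inf_le_right)
  have cm2 : Cm (a ⊓ c) (a ⊓ oc c) :=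
    (cm_of_le inf_le_left).infr ((cm_of_le inf_le_right).ocr)
  have cm3 : Cm (oc a ⊓ oc c) (oc a ⊓ c) :=
    (cm_of_le inf_le_left).infr ((cm_of_le inf_le_right).ocr')
  have cm4 : Cm (oc a ⊓ oc c) (a ⊓ oc c) :=
    ((cm_of_le inf_le_left).ocr').infr (cm_of_le inf_le_right)
  have cmW1 : Cm W (oc a ⊓ c) := by
    rw [hW]; exact (cm1.symm.supr cm3.symm).symm
  have cmW2 : Cm W (a ⊓ oc c) := by
    rw [hW]; exact (cm2.symm.supr cm4.symm).symm
  have hcm : Cm y0 W := by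
    rw [hy0]; exact (cmW1.supr cmW2).symm
  have hbot : W ⊓ y0 = ⊥ := by
    rw [hy0, cmW1.inf_sup cmW2]
    have b1 : W ⊓ (oc a ⊓ c) = ⊥ := by
      rw [hW, inf_comm, cm1.symm.inf_sup cm3.symm]
      have z1 : (oc a ⊓ c) ⊓ (a ⊓ c) = ⊥ :=
        bot_of_le_le (x := a) (inf_le_right.trans inf_le_left) (inf_le_left.trans inf_le_left)
      have z2 : (oc a ⊓ c) ⊓ (oc a ⊓ oc c) = ⊥ :=
        bot_of_le_le (x := c) (inf_le_left.trans inf_le_right)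
          (inf_le_right.trans inf_le_right)
      rw [z1, z2, sup_idem]
    have b2 : W ⊓ (a ⊓ oc c) = ⊥ := by
      rw [hW, inf_comm, cm2.symm.inf_sup cm4.symm]
      have z1 : (a ⊓ oc c) ⊓ (a ⊓ c) = ⊥ :=
        bot_of_le_le (x := c) (inf_le_right.trans inf_le_right)
          (inf_le_left.trans inf_le_right)
      have z2 : (a ⊓ oc c) ⊓ (oc a ⊓ oc c) = ⊥ :=
        bot_of_le_le (x := a) (inf_le_left.trans inf_le_left)
          (inf_le_right.trans inf_le_left)
      rw [z1, z2, sup_idem]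
    rw [b1, b2, sup_idem]
  have htop : W ⊔ y0 = ⊤ := by
    have hsplitc : (a ⊓ c) ⊔ (oc a ⊓ c) = c := by
      have h := (cm_comm4 a b).symm.split
      calc (a ⊓ c) ⊔ (oc a ⊓ c) = (c ⊓ a) ⊔ (c ⊓ oc a) := by ac_rfl
        _ = c := h.symm
    have hm : (a ⊓ oc c) ⊔ (oc a ⊓ oc c) = oc c := q4_mo2_self a b
    calc W ⊔ y0 = ((a ⊓ c) ⊔ (oc a ⊓ c)) ⊔ ((a ⊓ oc c) ⊔ (oc a ⊓ oc c)) := by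
          rw [hW, hy0]; ac_rfl
      _ = c ⊔ oc c := by rw [hsplitc, hm]
      _ = ⊤ := sup_oc c
  exact (eq_oc_of_cm hcm hbot htop).symm

lemma q4_R4 :
    ((((a ⊓ comm4 a b) ⊔ (oc a ⊓ oc (comm4 a b))) ⊓ b) ⊔
      (oc ((a ⊓ comm4 a b) ⊔ (oc a ⊓ oc (comm4 a b))) ⊓ b)) ⊔
      ((oc ((a ⊓ comm4 a b) ⊔ (oc a ⊓ oc (comm4 a b))) ⊔ b) ⊓ oc b) =
      ((a ⊓ b) ⊔ (oc a ⊓ b)) ⊔ ((oc a ⊓ oc b) ⊔ (oc b ⊓ oc (comm4 a b))) := by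
  rw [q4_ocW]
  set c : α := comm4 a b with hc
  set W : α := (a ⊓ c) ⊔ (oc a ⊓ oc c) with hW
  set y0 : α := (oc a ⊓ c) ⊔ (a ⊓ oc c) with hy0
  have le1 : a ⊓ b ≤ c := inf_le_comm4 a b
  have le3 : oc a ⊓ b ≤ c := by
    have := inf_le_comm4 (oc a) b; rwa [comm4_ocl] at this
  have cmcW : Cm c W := by
    rw [hW]
    exact ((cm_of_le inf_le_right).symm).supr ((cm_of_le_oc inf_le_right).symm)
  have cmcy0 : Cm c y0 := by
    rw [hy0]
    exact ((cm_of_le inf_le_right).symm).supr ((cm_of_le_oc inf_le_right).symm)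
  have hcW : c ⊓ W = a ⊓ c := by
    rw [hW, ((cm_of_le inf_le_right).symm).inf_sup ((cm_of_le_oc inf_le_right).symm)]
    have z1 : c ⊓ (a ⊓ c) = a ⊓ c := inf_eq_right.mpr inf_le_right
    have z2 : c ⊓ (oc a ⊓ oc c) = ⊥ :=
      bot_of_le_le inf_le_left (inf_le_right.trans inf_le_right)
    rw [z1, z2, sup_bot_eq]
  have hc'W : oc c ⊓ W = oc a ⊓ oc c := by
    rw [hW, (((cm_of_le inf_le_right).symm).ocl).inf_sup (((cm_of_le_oc inf_le_right).symm).ocl)]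
    have z1 : oc c ⊓ (a ⊓ c) = ⊥ :=
      bot_of_le_le (x := c) (inf_le_right.trans inf_le_right) inf_le_left
    have z2 : oc c ⊓ (oc a ⊓ oc c) = oc a ⊓ oc c := inf_eq_right.mpr inf_le_right
    rw [z1, z2, bot_sup_eq]
  have hcy0 : c ⊓ y0 = oc a ⊓ c := by
    rw [hy0, ((cm_of_le inf_le_right).symm).inf_sup ((cm_of_le_oc inf_le_right).symm)]
    have z1 : c ⊓ (oc a ⊓ c) = oc a ⊓ c := inf_eq_right.mpr inf_le_right
    have z2 : c ⊓ (a ⊓ oc c) = ⊥ :=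
      bot_of_le_le inf_le_left (inf_le_right.trans inf_le_right)
    rw [z1, z2, sup_bot_eq]
  have hc'y0 : oc c ⊓ y0 = a ⊓ oc c := by
    rw [hy0, (((cm_of_le inf_le_right).symm).ocl).inf_sup (((cm_of_le_oc inf_le_right).symm).ocl)]
    have z1 : oc c ⊓ (oc a ⊓ c) = ⊥ :=
      bot_of_le_le (x := c) (inf_le_right.trans inf_le_right) inf_le_left
    have z2 : oc c ⊓ (a ⊓ oc c) = a ⊓ oc c := inf_eq_right.mpr inf_le_right
    rw [z1, z2, bot_sup_eq]
  -- W ⊓ b = a ⊓ b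
  have hWb : W ⊓ b = a ⊓ b := by
    have cmsplit : Cm (W ⊓ b) c := (cmcW.infr (cm_comm4' a b).symm).symm
    have h1 : (W ⊓ b) ⊓ c = a ⊓ b := by
      rw [show (W ⊓ b) ⊓ c = (c ⊓ W) ⊓ b from by ac_rfl, hcW, hc, inf_comm4, inf_comm,
        (cm_of_ge inf_le_right).inf_sup ((cm_of_le_oc (inf_le_right : a ⊓ oc b ≤ oc b)).symm)]
      have z1 : b ⊓ (a ⊓ b) = a ⊓ b := by
        rw [show b ⊓ (a ⊓ b) = a ⊓ (b ⊓ b) from by ac_rfl, inf_idem]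
      have z2 : b ⊓ (a ⊓ oc b) = ⊥ :=
        bot_of_le_le inf_le_left (inf_le_right.trans inf_le_right)
      rw [z1, z2, sup_bot_eq]
    have h2 : (W ⊓ b) ⊓ oc c = ⊥ := by
      rw [show (W ⊓ b) ⊓ oc c = (oc c ⊓ W) ⊓ b from by ac_rfl, hc'W]
      refine bot_of_le_le (x := c) ?_ (inf_le_left.trans inf_le_right)
      exact le_trans (le_inf (inf_le_left.trans inf_le_left) inf_le_right) le3
    have h := cmsplit.split
    rw [h1, h2, sup_bot_eq] at h
    exact h
  -- y0 ⊓ b = oc a ⊓ b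
  have hy0b : y0 ⊓ b = oc a ⊓ b := by
    have cmsplit : Cm (y0 ⊓ b) c := (cmcy0.infr (cm_comm4' a b).symm).symm
    have h1 : (y0 ⊓ b) ⊓ c = oc a ⊓ b := by
      rw [show (y0 ⊓ b) ⊓ c = (c ⊓ y0) ⊓ b from by ac_rfl, hcy0, hc, q4_ha'c, inf_comm,
        (cm_of_ge inf_le_right).inf_sup ((cm_of_le_oc (inf_le_right : oc a ⊓ oc b ≤ oc b)).symm)]
      have z1 : b ⊓ (oc a ⊓ b) = oc a ⊓ b := by
        rw [show b ⊓ (oc a ⊓ b) = oc a ⊓ (b ⊓ b) from by ac_rfl, inf_idem]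
      have z2 : b ⊓ (oc a ⊓ oc b) = ⊥ :=
        bot_of_le_le inf_le_left (inf_le_right.trans inf_le_right)
      rw [z1, z2, sup_bot_eq]
    have h2 : (y0 ⊓ b) ⊓ oc c = ⊥ := by
      rw [show (y0 ⊓ b) ⊓ oc c = (oc c ⊓ y0) ⊓ b from by ac_rfl, hc'y0]
      refine bot_of_le_le (x := c) ?_ (inf_le_left.trans inf_le_right)
      exact le_trans (le_inf (inf_le_left.trans inf_le_left) inf_le_right) le1
    have h := cmsplit.split
    rw [h1, h2, sup_bot_eq] at h
    exact h
  -- (y0 ⊔ b) ⊓ oc b = (oc a ⊓ oc b) ⊔ (oc b ⊓ oc c)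
  have hX2 : (y0 ⊔ b) ⊓ oc b = (oc a ⊓ oc b) ⊔ (oc b ⊓ oc c) := by
    have cmcK2 : Cm c (y0 ⊔ b) := cmcy0.supr (cm_comm4' a b).symm
    have cmsplit : Cm ((y0 ⊔ b) ⊓ oc b) c :=
      (cmcK2.infr (cm_comm4' a b).symm.ocr).symm
    have hcK2 : c ⊓ (y0 ⊔ b) = (oc a ⊓ c) ⊔ ((b ⊓ a) ⊔ (b ⊓ oc a)) := by
      rw [cmcy0.inf_sup (cm_comm4' a b).symm, hcy0, inf_comm c b, hc, q4_hbc]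
    have h1 : ((y0 ⊔ b) ⊓ oc b) ⊓ c = oc a ⊓ oc b := by
      rw [show ((y0 ⊔ b) ⊓ oc b) ⊓ c = (c ⊓ (y0 ⊔ b)) ⊓ oc b from by ac_rfl, hcK2, hc,
        q4_ha'c, inf_comm]
      have c1 : Cm (oc b) (oc a ⊓ b) := ((cm_of_le (inf_le_right : oc a ⊓ b ≤ b)).ocr).symm
      have c2 : Cm (oc b) (oc a ⊓ oc b) := cm_of_ge inf_le_right
      have c3 : Cm (oc b) (b ⊓ a) := ((cm_of_le (inf_le_left : b ⊓ a ≤ b)).ocr).symm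
      have c4 : Cm (oc b) (b ⊓ oc a) := ((cm_of_le (inf_le_left : b ⊓ oc a ≤ b)).ocr).symm
      rw [(c1.supr c2).inf_sup (c3.supr c4), c1.inf_sup c2, c3.inf_sup c4]
      have z1 : oc b ⊓ (oc a ⊓ b) = ⊥ :=
        bot_of_le_le (x := b) (inf_le_right.trans inf_le_right) inf_le_left
      have z2 : oc b ⊓ (oc a ⊓ oc b) = oc a ⊓ oc b := by
        rw [show oc b ⊓ (oc a ⊓ oc b) = oc a ⊓ (oc b ⊓ oc b) from by ac_rfl, inf_idem]
      have z3 : oc b ⊓ (b ⊓ a) = ⊥ :=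
        bot_of_le_le (x := b) (inf_le_right.trans inf_le_left) inf_le_left
      have z4 : oc b ⊓ (b ⊓ oc a) = ⊥ :=
        bot_of_le_le (x := b) (inf_le_right.trans inf_le_left) inf_le_left
      rw [z1, z2, z3, z4]
      simp
    have h2 : ((y0 ⊔ b) ⊓ oc b) ⊓ oc c = oc b ⊓ oc c := by
      have hc'K2 : oc c ⊓ (y0 ⊔ b) = oc c := by
        rw [cmcy0.ocl.inf_sup (cm_comm4' a b).symm.ocl, hc'y0, inf_comm (oc c) b]
        rw [hc]
        exact mo2_comm4 a b
      rw [show ((y0 ⊔ b) ⊓ oc b) ⊓ oc c = (oc c ⊓ (y0 ⊔ b)) ⊓ oc b from by ac_rfl, hc'K2,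
        inf_comm]
    have h := cmsplit.split
    rw [h1, h2] at h
    exact h
  rw [hWb, hy0b, hX2]

end Q4e

section Q4f
variable (a b : α)

lemma q4_ocL :
    oc (a ⊔ (oc a ⊓ oc b)) = (oc a ⊓ b) ⊔ (oc a ⊓ oc (comm4 a b)) := by
  set c : α := comm4 a b with hc
  have le4 : oc a ⊓ oc b ≤ c := by
    have := inf_le_comm4 (oc a) (oc b); rwa [comm4_ocl, comm4_ocr] at this
  have cm1a : Cm (oc a ⊓ b) a := (cm_of_le (inf_le_left : oc a ⊓ b ≤ oc a)).ocr'
  have cm1e : Cm (oc a ⊓ b) (oc a ⊓ oc b) :=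
    (cm_of_le inf_le_left).infr ((cm_of_le inf_le_right).ocr)
  have cm2a : Cm (oc a ⊓ oc c) a := (cm_of_le (inf_le_left : oc a ⊓ oc c ≤ oc a)).ocr'
  have cm2e : Cm (oc a ⊓ oc c) (oc a ⊓ oc b) :=
    ((cm_of_le inf_le_left).infr ((cm_of_le le4).ocr)).symm
  have cmL1 : Cm (a ⊔ (oc a ⊓ oc b)) (oc a ⊓ b) := (cm1a.supr cm1e).symm
  have cmL2 : Cm (a ⊔ (oc a ⊓ oc b)) (oc a ⊓ oc c) := (cm2a.supr cm2e).symm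
  have hcm : Cm ((oc a ⊓ b) ⊔ (oc a ⊓ oc c)) (a ⊔ (oc a ⊓ oc b)) :=
    (cmL1.supr cmL2).symm
  have hbot : (a ⊔ (oc a ⊓ oc b)) ⊓ ((oc a ⊓ b) ⊔ (oc a ⊓ oc c)) = ⊥ := by
    rw [cmL1.inf_sup cmL2]
    have b1 : (a ⊔ (oc a ⊓ oc b)) ⊓ (oc a ⊓ b) = ⊥ := by
      rw [inf_comm, cm1a.inf_sup cm1e]
      have z1 : (oc a ⊓ b) ⊓ a = ⊥ :=
        bot_of_le_le (x := a) inf_le_right (inf_le_left.trans inf_le_left)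
      have z2 : (oc a ⊓ b) ⊓ (oc a ⊓ oc b) = ⊥ :=
        bot_of_le_le (x := b) (inf_le_left.trans inf_le_right)
          (inf_le_right.trans inf_le_right)
      rw [z1, z2, sup_idem]
    have b2 : (a ⊔ (oc a ⊓ oc b)) ⊓ (oc a ⊓ oc c) = ⊥ := by
      rw [inf_comm, cm2a.inf_sup cm2e]
      have z1 : (oc a ⊓ oc c) ⊓ a = ⊥ :=
        bot_of_le_le (x := a) inf_le_right (inf_le_left.trans inf_le_left)
      have z2 : (oc a ⊓ oc c) ⊓ (oc a ⊓ oc b) = ⊥ :=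
        bot_of_le_le (x := c) (inf_le_right.trans le4) (inf_le_left.trans inf_le_right)
      rw [z1, z2, sup_idem]
    rw [b1, b2, sup_idem]
  have htop : (a ⊔ (oc a ⊓ oc b)) ⊔ ((oc a ⊓ b) ⊔ (oc a ⊓ oc c)) = ⊤ := by
    calc (a ⊔ (oc a ⊓ oc b)) ⊔ ((oc a ⊓ b) ⊔ (oc a ⊓ oc c))
        = a ⊔ (((oc a ⊓ b) ⊔ (oc a ⊓ oc b)) ⊔ (oc a ⊓ oc c)) := by ac_rfl
      _ = a ⊔ ((oc a ⊓ c) ⊔ (oc a ⊓ oc c)) := by rw [← q4_ha'c, ← hc]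
      _ = a ⊔ oc a := by rw [← (cm_comm4 a b).ocl.split]
      _ = ⊤ := sup_oc a
  exact (eq_oc_of_cm hcm hbot htop).symm

lemma q4_ocP :
    oc (((a ⊓ b) ⊔ (oc a ⊓ b)) ⊔ ((oc a ⊓ oc b) ⊔ (oc b ⊓ oc (comm4 a b)))) =
      (a ⊓ oc b) ⊔ (b ⊓ oc (comm4 a b)) := by
  set c : α := comm4 a b with hc
  have le1 : a ⊓ b ≤ c := inf_le_comm4 a b
  have le2 : a ⊓ oc b ≤ c := by
    have := inf_le_comm4 a (oc b); rwa [comm4_ocr] at this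
  have le3 : oc a ⊓ b ≤ c := by
    have := inf_le_comm4 (oc a) b; rwa [comm4_ocl] at this
  have le4 : oc a ⊓ oc b ≤ c := by
    have := inf_le_comm4 (oc a) (oc b); rwa [comm4_ocl, comm4_ocr] at this
  set P : α := ((a ⊓ b) ⊔ (oc a ⊓ b)) ⊔ ((oc a ⊓ oc b) ⊔ (oc b ⊓ oc c)) with hP
  have cmP1 : Cm (a ⊓ oc b) (a ⊓ b) :=
    (cm_of_le inf_le_left).infr ((cm_of_le inf_le_right).ocr')
  have cmP2 : Cm (a ⊓ oc b) (oc a ⊓ b) :=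
    ((cm_of_le inf_le_left).ocr).infr ((cm_of_le inf_le_right).ocr')
  have cmP3 : Cm (a ⊓ oc b) (oc a ⊓ oc b) :=
    ((cm_of_le inf_le_left).ocr).infr (cm_of_le inf_le_right)
  have cmP4 : Cm (a ⊓ oc b) (oc b ⊓ oc c) :=
    (cm_of_le inf_le_right).infr ((cm_of_le le2).ocr)
  have cmQ1 : Cm (b ⊓ oc c) (a ⊓ b) :=
    ((cm_of_le inf_le_right).infr ((cm_of_le le1).ocr)).symm
  have cmQ2 : Cm (b ⊓ oc c) (oc a ⊓ b) :=
    ((cm_of_le inf_le_right).infr ((cm_of_le le3).ocr)).symm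
  have cmQ3 : Cm (b ⊓ oc c) (oc a ⊓ oc b) :=
    (((cm_of_le inf_le_right).ocr').infr ((cm_of_le le4).ocr)).symm
  have cmQ4 : Cm (b ⊓ oc c) (oc b ⊓ oc c) :=
    ((cm_of_le inf_le_left).ocr).infr (cm_of_le inf_le_right)
  have cmPP : Cm (a ⊓ oc b) P := by
    rw [hP]; exact (cmP1.supr cmP2).supr (cmP3.supr cmP4)
  have cmQP : Cm (b ⊓ oc c) P := by
    rw [hP]; exact (cmQ1.supr cmQ2).supr (cmQ3.supr cmQ4)
  have hcm : Cm ((a ⊓ oc b) ⊔ (b ⊓ oc c)) P := (cmPP.symm.supr cmQP.symm).symm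
  have hbot : P ⊓ ((a ⊓ oc b) ⊔ (b ⊓ oc c)) = ⊥ := by
    rw [cmPP.symm.inf_sup cmQP.symm]
    have b1 : P ⊓ (a ⊓ oc b) = ⊥ := by
      rw [inf_comm, hP, (cmP1.supr cmP2).inf_sup (cmP3.supr cmP4), cmP1.inf_sup cmP2,
        cmP3.inf_sup cmP4]
      have z1 : (a ⊓ oc b) ⊓ (a ⊓ b) = ⊥ :=
        bot_of_le_le (x := b) (inf_le_right.trans inf_le_right)
          (inf_le_left.trans inf_le_right)
      have z2 : (a ⊓ oc b) ⊓ (oc a ⊓ b) = ⊥ :=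
        bot_of_le_le (x := a) (inf_le_left.trans inf_le_left)
          (inf_le_right.trans inf_le_left)
      have z3 : (a ⊓ oc b) ⊓ (oc a ⊓ oc b) = ⊥ :=
        bot_of_le_le (x := a) (inf_le_left.trans inf_le_left)
          (inf_le_right.trans inf_le_left)
      have z4 : (a ⊓ oc b) ⊓ (oc b ⊓ oc c) = ⊥ :=
        bot_of_le_le (x := c) (inf_le_left.trans le2) (inf_le_right.trans inf_le_right)
      rw [z1, z2, z3, z4]
      simp
    have b2 : P ⊓ (b ⊓ oc c) = ⊥ := by
      rw [inf_comm, hP, (cmQ1.supr cmQ2).inf_sup (cmQ3.supr cmQ4), cmQ1.inf_sup cmQ2,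
        cmQ3.inf_sup cmQ4]
      have z1 : (b ⊓ oc c) ⊓ (a ⊓ b) = ⊥ :=
        bot_of_le_le (x := c) (inf_le_right.trans le1) (inf_le_left.trans inf_le_right)
      have z2 : (b ⊓ oc c) ⊓ (oc a ⊓ b) = ⊥ :=
        bot_of_le_le (x := c) (inf_le_right.trans le3) (inf_le_left.trans inf_le_right)
      have z3 : (b ⊓ oc c) ⊓ (oc a ⊓ oc b) = ⊥ :=
        bot_of_le_le (x := b) (inf_le_left.trans inf_le_left)
          (inf_le_right.trans inf_le_right)
      have z4 : (b ⊓ oc c) ⊓ (oc b ⊓ oc c) = ⊥ :=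
        bot_of_le_le (x := b) (inf_le_left.trans inf_le_left)
          (inf_le_right.trans inf_le_left)
      rw [z1, z2, z3, z4]
      simp
    rw [b1, b2, sup_idem]
  have htop : P ⊔ ((a ⊓ oc b) ⊔ (b ⊓ oc c)) = ⊤ := by
    have mo2b : (b ⊓ oc c) ⊔ (oc b ⊓ oc c) = oc c := by
      have := q4_mo2_self b a
      rwa [← comm4_symm a b, ← hc] at this
    have hdef : c = ((a ⊓ b) ⊔ (a ⊓ oc b)) ⊔ ((oc a ⊓ b) ⊔ (oc a ⊓ oc b)) := by rw [hc]; rfl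
    calc P ⊔ ((a ⊓ oc b) ⊔ (b ⊓ oc c))
        = (((a ⊓ b) ⊔ (a ⊓ oc b)) ⊔ ((oc a ⊓ b) ⊔ (oc a ⊓ oc b))) ⊔
            ((b ⊓ oc c) ⊔ (oc b ⊓ oc c)) := by rw [hP]; ac_rfl
      _ = c ⊔ oc c := by rw [← hdef, mo2b]
      _ = ⊤ := sup_oc c
  exact (eq_oc_of_cm hcm hbot htop).symm

lemma q4_F :
    (((a ⊔ (oc a ⊓ oc b)) ⊓ (((a ⊓ b) ⊔ (oc a ⊓ b)) ⊔ ((oc a ⊓ oc b) ⊔ (oc b ⊓ oc (comm4 a b))))) ⊔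
      (oc (a ⊔ (oc a ⊓ oc b)) ⊓ (((a ⊓ b) ⊔ (oc a ⊓ b)) ⊔ ((oc a ⊓ oc b) ⊔ (oc b ⊓ oc (comm4 a b)))))) ⊔
      ((oc (a ⊔ (oc a ⊓ oc b)) ⊔ (((a ⊓ b) ⊔ (oc a ⊓ b)) ⊔ ((oc a ⊓ oc b) ⊔ (oc b ⊓ oc (comm4 a b))))) ⊓
        oc (((a ⊓ b) ⊔ (oc a ⊓ b)) ⊔ ((oc a ⊓ oc b) ⊔ (oc b ⊓ oc (comm4 a b))))) =
      b ⊔ (oc a ⊓ oc b) := by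
  rw [q4_ocL, q4_ocP]
  set c : α := comm4 a b with hc
  set L : α := a ⊔ (oc a ⊓ oc b) with hL
  set P : α := ((a ⊓ b) ⊔ (oc a ⊓ b)) ⊔ ((oc a ⊓ oc b) ⊔ (oc b ⊓ oc c)) with hP
  set y0 : α := (oc a ⊓ b) ⊔ (oc a ⊓ oc c) with hy0
  have le1 : a ⊓ b ≤ c := inf_le_comm4 a b
  have le2 : a ⊓ oc b ≤ c := by
    have := inf_le_comm4 a (oc b); rwa [comm4_ocr] at this
  have le3 : oc a ⊓ b ≤ c := by
    have := inf_le_comm4 (oc a) b; rwa [comm4_ocl] at this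
  have le4 : oc a ⊓ oc b ≤ c := by
    have := inf_le_comm4 (oc a) (oc b); rwa [comm4_ocl, comm4_ocr] at this
  -- commutation with c
  have cmcL : Cm c L := by
    rw [hL]; exact (cm_comm4 a b).symm.supr (cm_of_le le4).symm
  have cmcP : Cm c P := by
    rw [hP]
    exact ((cm_of_le le1).symm.supr (cm_of_le le3).symm).supr
      ((cm_of_le le4).symm.supr (cm_of_le_oc inf_le_right).symm)
  have cmcy0 : Cm c y0 := by
    rw [hy0]; exact (cm_of_le le3).symm.supr (cm_of_le_oc inf_le_right).symm
  -- c- and c'-parts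
  have hcL : c ⊓ L = ((a ⊓ b) ⊔ (a ⊓ oc b)) ⊔ (oc a ⊓ oc b) := by
    rw [hL, (cm_comm4 a b).symm.inf_sup (cm_of_le le4).symm, inf_comm c a, hc, inf_comm4,
      inf_eq_right.mpr le4]
  have hc'L : oc c ⊓ L = a ⊓ oc c := by
    rw [hL, (cm_comm4 a b).symm.ocl.inf_sup (cm_of_le le4).symm.ocl]
    have z1 : oc c ⊓ a = a ⊓ oc c := inf_comm _ _
    have z2 : oc c ⊓ (oc a ⊓ oc b) = ⊥ :=
      bot_of_le_le (x := c) (inf_le_right.trans le4) inf_le_left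
    rw [z1, z2, sup_bot_eq]
  have hcP : c ⊓ P = ((a ⊓ b) ⊔ (oc a ⊓ b)) ⊔ (oc a ⊓ oc b) := by
    rw [hP, ((cm_of_le le1).symm.supr (cm_of_le le3).symm).inf_sup
      ((cm_of_le le4).symm.supr (cm_of_le_oc inf_le_right).symm),
      (cm_of_le le1).symm.inf_sup (cm_of_le le3).symm,
      (cm_of_le le4).symm.inf_sup (cm_of_le_oc inf_le_right).symm]
    have z1 : c ⊓ (a ⊓ b) = a ⊓ b := inf_eq_right.mpr le1
    have z2 : c ⊓ (oc a ⊓ b) = oc a ⊓ b := inf_eq_right.mpr le3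
    have z3 : c ⊓ (oc a ⊓ oc b) = oc a ⊓ oc b := inf_eq_right.mpr le4
    have z4 : c ⊓ (oc b ⊓ oc c) = ⊥ :=
      bot_of_le_le inf_le_left (inf_le_right.trans inf_le_right)
    rw [z1, z2, z3, z4, sup_bot_eq]
  have hc'P : oc c ⊓ P = oc b ⊓ oc c := by
    rw [hP, ((cm_of_le le1).symm.supr (cm_of_le le3).symm).ocl.inf_sup
      ((cm_of_le le4).symm.supr (cm_of_le_oc inf_le_right).symm).ocl,
      (cm_of_le le1).symm.ocl.inf_sup (cm_of_le le3).symm.ocl,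
      (cm_of_le le4).symm.ocl.inf_sup (cm_of_le_oc inf_le_right).symm.ocl]
    have z1 : oc c ⊓ (a ⊓ b) = ⊥ :=
      bot_of_le_le (x := c) (inf_le_right.trans le1) inf_le_left
    have z2 : oc c ⊓ (oc a ⊓ b) = ⊥ :=
      bot_of_le_le (x := c) (inf_le_right.trans le3) inf_le_left
    have z3 : oc c ⊓ (oc a ⊓ oc b) = ⊥ :=
      bot_of_le_le (x := c) (inf_le_right.trans le4) inf_le_left
    have z4 : oc c ⊓ (oc b ⊓ oc c) = oc b ⊓ oc c := inf_eq_right.mpr inf_le_right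
    rw [z1, z2, z3, z4, bot_sup_eq, bot_sup_eq, bot_sup_eq]
  have hcy0 : c ⊓ y0 = oc a ⊓ b := by
    rw [hy0, (cm_of_le le3).symm.inf_sup (cm_of_le_oc inf_le_right).symm]
    have z1 : c ⊓ (oc a ⊓ b) = oc a ⊓ b := inf_eq_right.mpr le3
    have z2 : c ⊓ (oc a ⊓ oc c) = ⊥ :=
      bot_of_le_le inf_le_left (inf_le_right.trans inf_le_right)
    rw [z1, z2, sup_bot_eq]
  have hc'y0 : oc c ⊓ y0 = oc a ⊓ oc c := by
    rw [hy0, (cm_of_le le3).symm.ocl.inf_sup (cm_of_le_oc inf_le_right).symm.ocl]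
    have z1 : oc c ⊓ (oc a ⊓ b) = ⊥ :=
      bot_of_le_le (x := c) (inf_le_right.trans le3) inf_le_left
    have z2 : oc c ⊓ (oc a ⊓ oc c) = oc a ⊓ oc c := inf_eq_right.mpr inf_le_right
    rw [z1, z2, bot_sup_eq]
  -- L ⊓ P
  have hLP : L ⊓ P = (a ⊓ b) ⊔ (oc a ⊓ oc b) := by
    have cmsplit : Cm (L ⊓ P) c := (cmcL.infr cmcP).symm
    have h1 : (L ⊓ P) ⊓ c = (a ⊓ b) ⊔ (oc a ⊓ oc b) := by
      rw [show (L ⊓ P) ⊓ c = (c ⊓ L) ⊓ (c ⊓ P) from by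
        rw [show (c ⊓ L) ⊓ (c ⊓ P) = (L ⊓ P) ⊓ (c ⊓ c) from by ac_rfl, inf_idem], hcL, hcP]
      -- A1 ⊓ B1
      set A1 : α := ((a ⊓ b) ⊔ (a ⊓ oc b)) ⊔ (oc a ⊓ oc b) with hA1
      have cmA1e1 : Cm (a ⊓ b) A1 := by
        rw [hA1]
        exact ((cm_self _).supr
          ((cm_of_le inf_le_left).infr ((cm_of_le inf_le_right).ocr))).supr
          (((cm_of_le inf_le_left).ocr).infr ((cm_of_le inf_le_right).ocr))
      have cmA1e3 : Cm (oc a ⊓ b) A1 := by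
        rw [hA1]
        exact ((((cm_of_le inf_le_left).ocr').infr (cm_of_le inf_le_right)).supr
          (((cm_of_le inf_le_left).ocr').infr ((cm_of_le inf_le_right).ocr))).supr
          ((cm_of_le inf_le_left).infr ((cm_of_le inf_le_right).ocr))
      have cmA1e4 : Cm (oc a ⊓ oc b) A1 := by
        rw [hA1]
        exact ((((cm_of_le inf_le_left).ocr').infr ((cm_of_le inf_le_right).ocr')).supr
          (((cm_of_le inf_le_left).ocr').infr (cm_of_le inf_le_right))).supr (cm_self _)
      rw [(cmA1e1.symm.supr cmA1e3.symm).inf_sup cmA1e4.symm]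
      rw [cmA1e1.symm.inf_sup cmA1e3.symm]
      have z1 : A1 ⊓ (a ⊓ b) = a ⊓ b := inf_eq_right.mpr (le_sup_left.trans le_sup_left)
      have z3 : A1 ⊓ (oc a ⊓ b) = ⊥ := by
        rw [inf_comm, hA1, Cm.inf_sup3
          (((cm_of_le inf_le_left).ocr').infr (cm_of_le inf_le_right))
          (((cm_of_le inf_le_left).ocr').infr ((cm_of_le inf_le_right).ocr))
          ((cm_of_le inf_le_left).infr ((cm_of_le inf_le_right).ocr))]
        have w1 : (oc a ⊓ b) ⊓ (a ⊓ b) = ⊥ :=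
          bot_of_le_le (x := a) (inf_le_right.trans inf_le_left)
            (inf_le_left.trans inf_le_left)
        have w2 : (oc a ⊓ b) ⊓ (a ⊓ oc b) = ⊥ :=
          bot_of_le_le (x := a) (inf_le_right.trans inf_le_left)
            (inf_le_left.trans inf_le_left)
        have w3 : (oc a ⊓ b) ⊓ (oc a ⊓ oc b) = ⊥ :=
          bot_of_le_le (x := b) (inf_le_left.trans inf_le_right)
            (inf_le_right.trans inf_le_right)
        rw [w1, w2, w3]
        simp
      have z4 : A1 ⊓ (oc a ⊓ oc b) = oc a ⊓ oc b := inf_eq_right.mpr le_sup_right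
      rw [z1, z3, z4, sup_bot_eq]
    have h2 : (L ⊓ P) ⊓ oc c = ⊥ := by
      rw [show (L ⊓ P) ⊓ oc c = (oc c ⊓ L) ⊓ (oc c ⊓ P) from by
        rw [show (oc c ⊓ L) ⊓ (oc c ⊓ P) = (L ⊓ P) ⊓ (oc c ⊓ oc c) from by ac_rfl, inf_idem],
        hc'L, hc'P]
      refine bot_of_le_le (x := c) ?_ (inf_le_left.trans inf_le_right)
      exact le_trans (le_inf (inf_le_left.trans inf_le_left)
        (inf_le_right.trans inf_le_left)) le2
    have h := cmsplit.split
    rw [h1, h2, sup_bot_eq] at h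
    exact h
  -- y0 ⊓ P
  have hy0P : y0 ⊓ P = oc a ⊓ b := by
    have cmsplit : Cm (y0 ⊓ P) c := (cmcy0.infr cmcP).symm
    have h1 : (y0 ⊓ P) ⊓ c = oc a ⊓ b := by
      rw [show (y0 ⊓ P) ⊓ c = (c ⊓ y0) ⊓ (c ⊓ P) from by
        rw [show (c ⊓ y0) ⊓ (c ⊓ P) = (y0 ⊓ P) ⊓ (c ⊓ c) from by ac_rfl, inf_idem],
        hcy0, hcP]
      exact inf_eq_left.mpr (le_sup_left.trans' le_sup_right)
    have h2 : (y0 ⊓ P) ⊓ oc c = ⊥ := by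
      rw [show (y0 ⊓ P) ⊓ oc c = (oc c ⊓ y0) ⊓ (oc c ⊓ P) from by
        rw [show (oc c ⊓ y0) ⊓ (oc c ⊓ P) = (y0 ⊓ P) ⊓ (oc c ⊓ oc c) from by ac_rfl, inf_idem],
        hc'y0, hc'P]
      refine bot_of_le_le (x := c) ?_ (inf_le_left.trans inf_le_right)
      exact le_trans (le_inf (inf_le_left.trans inf_le_left)
        (inf_le_right.trans inf_le_left)) le4
    have h := cmsplit.split
    rw [h1, h2, sup_bot_eq] at h
    exact h
  -- (y0 ⊔ P) ⊓ oc P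
  have hX3 : (y0 ⊔ P) ⊓ ((a ⊓ oc b) ⊔ (b ⊓ oc c)) = b ⊓ oc c := by
    have cmcy0P : Cm c ((a ⊓ oc b) ⊔ (b ⊓ oc c)) :=
      (cm_of_le le2).symm.supr (cm_of_le_oc inf_le_right).symm
    have cmcY3 : Cm c (y0 ⊔ P) := cmcy0.supr cmcP
    have cmsplit : Cm ((y0 ⊔ P) ⊓ ((a ⊓ oc b) ⊔ (b ⊓ oc c))) c :=
      (cmcY3.infr cmcy0P).symm
    have hcY3 : c ⊓ (y0 ⊔ P) = (oc a ⊓ b) ⊔ (((a ⊓ b) ⊔ (oc a ⊓ b)) ⊔ (oc a ⊓ oc b)) := by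
      rw [cmcy0.inf_sup cmcP, hcy0, hcP]
    have hc'Y3 : oc c ⊓ (y0 ⊔ P) = oc c := by
      rw [cmcy0.ocl.inf_sup cmcP.ocl, hc'y0, hc'P]
      have := mo2_comm4 (oc a) (oc b)
      rw [comm4_ocl, comm4_ocr] at this
      exact this
    have hcy0P : c ⊓ ((a ⊓ oc b) ⊔ (b ⊓ oc c)) = a ⊓ oc b := by
      rw [(cm_of_le le2).symm.inf_sup (cm_of_le_oc inf_le_right).symm]
      have z1 : c ⊓ (a ⊓ oc b) = a ⊓ oc b := inf_eq_right.mpr le2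
      have z2 : c ⊓ (b ⊓ oc c) = ⊥ :=
        bot_of_le_le inf_le_left (inf_le_right.trans inf_le_right)
      rw [z1, z2, sup_bot_eq]
    have hc'y0P : oc c ⊓ ((a ⊓ oc b) ⊔ (b ⊓ oc c)) = b ⊓ oc c := by
      rw [(cm_of_le le2).symm.ocl.inf_sup (cm_of_le_oc inf_le_right).symm.ocl]
      have z1 : oc c ⊓ (a ⊓ oc b) = ⊥ :=
        bot_of_le_le (x := c) (inf_le_right.trans le2) inf_le_left
      have z2 : oc c ⊓ (b ⊓ oc c) = b ⊓ oc c := inf_eq_right.mpr inf_le_right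
      rw [z1, z2, bot_sup_eq]
    have h1 : ((y0 ⊔ P) ⊓ ((a ⊓ oc b) ⊔ (b ⊓ oc c))) ⊓ c = ⊥ := by
      rw [show ((y0 ⊔ P) ⊓ ((a ⊓ oc b) ⊔ (b ⊓ oc c))) ⊓ c =
        (c ⊓ (y0 ⊔ P)) ⊓ (c ⊓ ((a ⊓ oc b) ⊔ (b ⊓ oc c))) from by
          rw [show (c ⊓ (y0 ⊔ P)) ⊓ (c ⊓ ((a ⊓ oc b) ⊔ (b ⊓ oc c))) =
            ((y0 ⊔ P) ⊓ ((a ⊓ oc b) ⊔ (b ⊓ oc c))) ⊓ (c ⊓ c) from by ac_rfl, inf_idem],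
        hcY3, hcy0P, inf_comm]
      have c1 : Cm (a ⊓ oc b) (oc a ⊓ b) :=
        ((cm_of_le inf_le_left).ocr).infr ((cm_of_le inf_le_right).ocr')
      have c2 : Cm (a ⊓ oc b) (a ⊓ b) :=
        (cm_of_le inf_le_left).infr ((cm_of_le inf_le_right).ocr')
      have c3 : Cm (a ⊓ oc b) (oc a ⊓ oc b) :=
        ((cm_of_le inf_le_left).ocr).infr (cm_of_le inf_le_right)
      rw [c1.inf_sup ((c2.supr c1).supr c3), Cm.inf_sup3 c2 c1 c3]
      have z1 : (a ⊓ oc b) ⊓ (oc a ⊓ b) = ⊥ :=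
        bot_of_le_le (x := a) (inf_le_left.trans inf_le_left)
          (inf_le_right.trans inf_le_left)
      have z2 : (a ⊓ oc b) ⊓ (a ⊓ b) = ⊥ :=
        bot_of_le_le (x := b) (inf_le_right.trans inf_le_right)
          (inf_le_left.trans inf_le_right)
      have z3 : (a ⊓ oc b) ⊓ (oc a ⊓ oc b) = ⊥ :=
        bot_of_le_le (x := a) (inf_le_left.trans inf_le_left)
          (inf_le_right.trans inf_le_left)
      rw [z1, z2, z3]
      simp
    have h2 : ((y0 ⊔ P) ⊓ ((a ⊓ oc b) ⊔ (b ⊓ oc c))) ⊓ oc c = b ⊓ oc c := by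
      rw [show ((y0 ⊔ P) ⊓ ((a ⊓ oc b) ⊔ (b ⊓ oc c))) ⊓ oc c =
        (oc c ⊓ (y0 ⊔ P)) ⊓ (oc c ⊓ ((a ⊓ oc b) ⊔ (b ⊓ oc c))) from by
          rw [show (oc c ⊓ (y0 ⊔ P)) ⊓ (oc c ⊓ ((a ⊓ oc b) ⊔ (b ⊓ oc c))) =
            ((y0 ⊔ P) ⊓ ((a ⊓ oc b) ⊔ (b ⊓ oc c))) ⊓ (oc c ⊓ oc c) from by ac_rfl, inf_idem],
        hc'Y3, hc'y0P]
      exact inf_eq_right.mpr inf_le_right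
    have h := cmsplit.split
    rw [h1, h2, bot_sup_eq] at h
    exact h
  rw [hLP, hy0P, hX3, hc]
  calc (((a ⊓ b) ⊔ (oc a ⊓ oc b)) ⊔ (oc a ⊓ b)) ⊔ (b ⊓ oc (comm4 a b))
      = (((b ⊓ a) ⊔ (b ⊓ oc a)) ⊔ (b ⊓ oc (comm4 a b))) ⊔ (oc a ⊓ oc b) := by ac_rfl
    _ = ((b ⊓ comm4 a b) ⊔ (b ⊓ oc (comm4 a b))) ⊔ (oc a ⊓ oc b) := by rw [← q4_hbc]
    _ = b ⊔ (oc a ⊓ oc b) := by rw [← (cm_comm4' a b).split]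

end Q4f

/-- case 4 : non-tollens implication -/
lemma case4 (a b : α) :
    qimp 4 (qimp 4 b (qimp 4 b a)) (qimp 4 (qimp 4 (qimp 4 a b) a) b) = b ⊔ (oc a ⊓ oc b) := by
  simp only [qimp]
  rw [q4_R14 a b, q4_R4 a b, q4_L a b]
  exact q4_F a b

end QOML

theorem dishkant_via_qimp (i : ℕ) (hi : i ∈ Finset.Icc 1 5) (a b : α) :
    qimp 2 a b =
      qimp i (qimp i b (qimp i b a)) (qimp i (qimp i (qimp i a b) a) b) := by
  rw [Finset.mem_Icc] at hi
  obtain ⟨h1, h2⟩ := hi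
  have h0 : qimp 2 a b = b ⊔ (oc a ⊓ oc b) := by simp only [qimp]
  interval_cases i
  · exact h0.trans (QOML.case1 a b).symm
  · exact h0.trans (QOML.case2 a b).symm
  · exact h0.trans (QOML.case3 a b).symm
  · exact h0.trans (QOML.case4 a b).symm
  · exact h0.trans (QOML.case5 a b).symm
end

section
/- There exists an orthomodular implication algebra that is not an orthoimplication algebra; i.e., there is a finite structure (A, ·, 1) satisfying axioms O1–O6 of OMIA in which axiom OI3 of OIA, a((ba)c) = ac, fails for some a, b, c. -/
def omiaTbl : Fin 12 → Fin 12 → Fin 12 :=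
  ![![11, 11, 11, 11, 11, 11, 11, 11, 11, 11, 11, 11],
   ![9, 11, 8, 9, 10, 11, 10, 11, 8, 9, 10, 11],
   ![10, 7, 11, 9, 10, 11, 9, 7, 11, 9, 10, 11],
   ![7, 7, 8, 11, 10, 11, 8, 7, 8, 11, 10, 11],
   ![8, 7, 8, 9, 11, 11, 7, 7, 8, 9, 11, 11],
   ![6, 7, 8, 9, 10, 11, 6, 7, 8, 9, 10, 11],
   ![5, 5, 5, 5, 5, 5, 11, 11, 11, 11, 11, 11],
   ![3, 5, 2, 3, 4, 5, 10, 11, 8, 9, 10, 11],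
   ![4, 1, 5, 3, 4, 5, 9, 7, 11, 9, 10, 11],
   ![1, 1, 2, 5, 4, 5, 8, 7, 8, 11, 10, 11],
   ![2, 1, 2, 3, 5, 5, 7, 7, 8, 9, 11, 11],
   ![0, 1, 2, 3, 4, 5, 6, 7, 8, 9, 10, 11]]

/-- There is a finite orthomodular implication algebra that is not an
orthoimplication algebra (axiom OI3 fails). -/
theorem omia_not_oia :
    ∃ (A : Type) (_ : Fintype A) (op : A → A → A) (one : A),
      (∀ a, op a a = one) ∧
      (∀ a b, op a (op b a) = one) ∧
      (∀ a b, op (op a b) a = a) ∧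
      (∀ a b, op (op a b) b = op (op b a) a) ∧
      (∀ a b c, op (op (op (op a b) b) c) (op a c) = one) ∧
      (∀ a b c,
        op (op (op (op (op (op (op (op (op (op a b) b) c) c) c) a) a) c) a) a =
          op (op (op (op a b) b) c) c) ∧
      (∃ a b c, op a (op (op b a) c) ≠ op a c) := by
  refine ⟨Fin 12, inferInstance, omiaTbl, 11, ?_, ?_, ?_, ?_, ?_, ?_, ?_⟩ <;> decide
end

section
/- In any orthoimplication algebra (and hence in any orthomodular implication algebra), the identity ab = (b(ba))(((ab)a)b) holds for all a, b. -/
theorem oia_eq_q2 {A : Type*} (op : A → A → A)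
    (OI1 : ∀ a b, op (op a b) a = a)
    (OI2 : ∀ a b, op (op a b) b = op (op b a) a)
    (OI3 : ∀ a b c, op a (op (op b a) c) = op a c) :
    ∀ a b : A, op a b = op (op b (op b a)) (op (op (op a b) a) b) := by
  intro a b
  have h0 := OI2 b a
  have h1 := OI1 b (op b a)
  have h2 := OI2 (op (op (op b a) b) a) (op (op a b) b)
  have h3 := OI2 (op a (op (op b a) b)) (op (op b (op b a)) (op a b))
  have h4 := OI2 (op (op (op (op a b) a) b) b) (op (op (op a b) a) b)
  have h5 := OI1 (op (op b a) (op a b)) (op a b)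
  have h6 := OI2 (op (op b a) (op a b)) (op b (op b (op b a)))
  have h7 := OI1 a (op (op b a) b)
  have h8 := OI1 (op (op (op a b) a) b) b
  have h9 := OI1 (op (op (op a b) a) b) (op a (op (op b a) b))
  have h10 := OI1 (op (op a b) b) (op a b)
  have h11 := OI1 (op (op b a) (op b a)) (op a (op (op b a) b))
  have h12 := OI1 (op b a) (op a b)
  have h13 := OI1 (op b a) a
  have h14 := OI3 b (op b (op b a)) a
  have h15 := OI3 (op (op (op b a) b) a) (op (op b a) a) (op a (op (op b a) b))
  have h16 := OI3 (op a (op (op b a) b)) (op b (op b a)) (op (op b a) (op a b))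
  have h17 := OI3 (op (op b a) (op a b)) (op b (op b a)) (op (op b a) (op a b))
  have h18 := OI3 (op (op b a) (op a b)) a (op a (op (op b a) b))
  have h19 := OI3 a b (op a b)
  have h20 := OI3 a (op a b) b
  have h21 := OI3 (op b a) b a
  grind
end

section
/- In a unified quantum implication algebra with fixed element m, the principal order filter I_m = {a : m•a = 1}, equipped with join ⊔, the complement a ↦ a•m, and meets defined by a ⊓ b := ((a•m) ⊔ (b•m))•m, forms an orthomodular lattice with bottom m and top 1: for all a, b ∈ I_m one has a ⊔ (a•m) = 1, ((a•m)•m) = a, a ≤ b implies b•m ≤ a•m (where x ≤ y means x•y = 1), a ⊓ b is the greatest lower bound of a and b in I_m, and the orthomodular law a ≤ b ∧ a ⊔ (b•m) = 1 → b ≤ a holds. -/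
variable {A : Type*}

/-- Axioms of a unified quantum implication algebra (UQIA), with binary
operation `op` (written `•` in the paper), join term `sq` (written `⊔`),
and `one` the common value of `a • a`. -/
structure UQIA (op : A → A → A) (sq : A → A → A) (one : A) : Prop where
  uq1 : ∀ a : A, op a a = one
  uq2 : ∀ a b : A, op a (sq a b) = one
  uq3 : ∀ a b : A, op b (sq a b) = one
  uq4 : ∀ a : A, op a one = one
  uq5 : ∀ a b : A, op a b = one ∧ op b a = one ↔ a = b
  uq6 : ∀ a b c : A, op a b = one → op b c = one → op a c = one
  uq7 : ∀ a b c : A, op a c = one → op b c = one → op (sq a b) c = one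
  uq8 : ∀ a b : A, op b a = one → sq a (op a b) = one
  uq9 : ∀ a b : A, op b a = one → op (op (op a b) b) a = one
  uq10 : ∀ a b : A, op b a = one → op a (op (op a b) b) = one
  uq11 : ∀ a b c : A, op b a = one → op c a = one → op c b = one →
    op (op a c) (op b c) = one
  uq12 : ∀ a b c : A, op c a = one → op c b = one → op a b = one →
    sq a (op b c) = one → op b a = one

/-- In a UQIA, the principal order filter generated by `m`, with complement
`a ↦ a • m` and meet `a ⊓ b := ((a•m) ⊔ (b•m)) • m`, is an orthomodular
lattice with bottom `m` and top `1`. -/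
theorem uqia_filter_oml (op : A → A → A) (sq : A → A → A) (one : A)
    (h : UQIA op sq one) (m : A) :
    ∀ a b : A, op m a = one → op m b = one →
      -- a ⊔ aᶜ = 1
      (sq a (op a m) = one) ∧
      -- complement is involutive on the filter
      (op (op a m) m = a) ∧
      -- complement is order-reversing
      (op a b = one → op (op b m) (op a m) = one) ∧
      -- a ⊓ b is a lower bound of a and b
      (op (op (sq (op a m) (op b m)) m) a = one) ∧
      (op (op (sq (op a m) (op b m)) m) b = one) ∧
      -- and the greatest lower bound within the filter
      (∀ c : A, op m c = one → op c a = one → op c b = one →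
        op c (op (sq (op a m) (op b m)) m) = one) ∧
      -- bottom and top
      (op m a = one) ∧ (op a one = one) ∧
      -- orthomodular law
      (op a b = one → sq a (op b m) = one → op b a = one) := by
  intro a b hma hmb
  have dc : ∀ x, op m x = one → op (op x m) m = x := fun x hx =>
    (h.uq5 _ _).mp ⟨h.uq9 x m hx, h.uq10 x m hx⟩
  have hom : op one m = m := by
    have := dc m (h.uq1 m); rwa [h.uq1] at this
  have hmxm : ∀ x, op m x = one → op m (op x m) = one := fun x hx => by
    have h11 := h.uq11 one x m (h.uq4 x) (h.uq4 m) hx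
    rwa [hom] at h11
  have rev : ∀ x y, op m x = one → op m y = one → op x y = one →
      op (op y m) (op x m) = one := fun x y hx hy hxy => h.uq11 y x m hxy hy hx
  set j := sq (op a m) (op b m) with hj
  have hmam := hmxm a hma
  have hmbm := hmxm b hmb
  have haj : op (op a m) j = one := h.uq2 _ _
  have hbj : op (op b m) j = one := h.uq3 _ _
  have hmj : op m j = one := h.uq6 m (op a m) j hmam haj
  have lba : op (op j m) a = one := by
    have := rev (op a m) j hmam hmj haj
    rwa [dc a hma] at this
  have lbb : op (op j m) b = one := by
    have := rev (op b m) j hmbm hmj hbj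
    rwa [dc b hmb] at this
  refine ⟨h.uq8 a m hma, dc a hma, fun hab => rev a b hma hmb hab, lba, lbb,
    ?_, hma, h.uq4 a, fun hab hsq => h.uq12 a b m hma hmb hab hsq⟩
  intro c hmc hca hcb
  have h1 := rev c a hmc hma hca
  have h2 := rev c b hmc hmb hcb
  have h3 := h.uq7 (op a m) (op b m) (op c m) h1 h2
  have h4 := rev j (op c m) hmj (hmxm c hmc) h3
  rwa [dc c hmc] at h4
end
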